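/- arXiv:2305.09173 — 7 statements merged into one kernel-verified Lean document; each statement's English description precedes it below -/
import Mathlib

section
/- For the Laplacian matrix of a weighted directed graph, zero is a simple eigenvalue (has algebraic multiplicity one) if and only if the graph contains a directed spanning tree. -/
/-!
The all-ones vector lies in the kernel of `L`, and the algebraic multiplicity of `0` is the
dimension of the generalised eigenspace `⋃ₖ ker Lᵏ`.

If a root reaches every node, a maximum principle applies: where `x` is maximal,
`(L x) i = ∑ⱼ L i j (x j - x i)` is a sum of nonnegative terms, so if it vanishes, `x` is also
maximal at every in-neighbour of `i`. Following the path back to the root shows that `L x = 0`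
forces `x` to be constant, and comparing a maximum and a minimum of `x` shows that `L x` can only
be constant if it vanishes. Hence `ker Lᵏ = span {1}` for every `k ≥ 1`.

Otherwise some two nodes have disjoint sets of ancestors. Each set is closed under taking
in-neighbours, so `L` is block triangular with these two sets as diagonal blocks. Both blocks
have zero row sums, so each contributes a factor `X` to the characteristic polynomial.
-/

open Matrix Polynomial Finset

variable {ι R : Type*}

theorem Relation.exists_forall_reflTransGen [Fintype ι] [Nonempty ι] {r : ι → ι → Prop}
    (h : ∀ a b, ∃ c, ReflTransGen r c a ∧ ReflTransGen r c b) :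
    ∃ c, ∀ a, ReflTransGen r c a := by
  classical
  suffices ∀ s : Finset ι, ∃ c, ∀ a ∈ s, ReflTransGen r c a by
    simpa using this univ
  intro s
  induction s using Finset.induction_on with
  | empty => exact ⟨Classical.arbitrary ι, by simp⟩
  | insert a s _ ih =>
    obtain ⟨c, hc⟩ := ih
    obtain ⟨d, hdc, hda⟩ := h c a
    refine ⟨d, fun b hb => ?_⟩
    rcases Finset.mem_insert.mp hb with rfl | hb
    · exact hda
    · exact hdc.trans (hc b hb)

namespace Matrix

section Order

variable [Zero R] [PartialOrder R] {L : Matrix ι ι R}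

def HasEdge (L : Matrix ι ι R) (a b : ι) : Prop := a ≠ b ∧ L b a < 0

theorem eq_zero_of_reflTransGen_of_not_reflTransGen (hoff : ∀ i j, i ≠ j → L i j ≤ 0) {i j v : ι}
    (hi : Relation.ReflTransGen L.HasEdge i v) (hj : ¬ Relation.ReflTransGen L.HasEdge j v) :
    L i j = 0 := by
  by_contra hij
  have hji : j ≠ i := by rintro rfl; exact hj hi
  exact hj (.head ⟨hji, (hoff i j hji.symm).lt_of_ne hij⟩ hi)

end Order

section CommRing

variable [Fintype ι] [CommRing R]

theorem mulVec_apply_eq_sum_mul_sub {M : Matrix ι ι R} (hrow : ∀ i, ∑ j, M i j = 0)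
    (x : ι → R) (i : ι) : (M *ᵥ x) i = ∑ j, M i j * (x j - x i) := by
  simp only [mul_sub, Finset.sum_sub_distrib, ← Finset.sum_mul, hrow i, zero_mul, sub_zero]
  rfl

theorem mulVec_one_eq_zero {M : Matrix ι ι R} (hrow : ∀ i, ∑ j, M i j = 0) : M *ᵥ 1 = 0 :=
  funext fun i => by simpa [mulVec, dotProduct] using hrow i

variable [DecidableEq ι]

theorem X_dvd_charpoly_of_sum_row_eq_zero [Nonempty ι] {M : Matrix ι ι R}
    (hrow : ∀ i, ∑ j, M i j = 0) : X ∣ M.charpoly := by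
  have hdet : M.det = 0 :=
    det_eq_zero_of_mulVec_eq_zero_of_mem_nonZeroDivisors (mulVec_one_eq_zero hrow)
    (i := Classical.arbitrary ι) (one_mem _)
  rw [X_dvd_iff]
  rw [det_eq_sign_charpoly_coeff] at hdet
  exact ((isUnit_neg_one (α := R)).pow _).mul_right_eq_zero.mp hdet

theorem X_dvd_charpoly_toSquareBlock {α : Type*} [DecidableEq α] {M : Matrix ι ι R}
    (hrow : ∀ i, ∑ j, M i j = 0) (b : ι → α) (a : α)
    (hclosed : ∀ i j, b i = a → b j ≠ a → M i j = 0) (ha : ∃ i, b i = a) :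
    X ∣ (M.toSquareBlock b a).charpoly := by
  obtain ⟨i₀, hi₀⟩ := ha
  have : Nonempty { i // b i = a } := ⟨⟨i₀, hi₀⟩⟩
  refine X_dvd_charpoly_of_sum_row_eq_zero fun i => ?_
  have hout : ∀ j, M i j ≠ 0 → b j = a := fun j hj =>
    by_contra fun hja => hj (hclosed i j i.2 hja)
  rw [toSquareBlock_def, ← hrow i, ← Finset.sum_filter_of_ne (p := (b · = a)) fun j _ => hout j]
  exact (Finset.sum_subtype _ (fun j => by simp) _).symm

theorem X_sq_dvd_charpoly_of_disjoint_closed {M : Matrix ι ι R}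
    (hrow : ∀ i, ∑ j, M i j = 0) (p q : ι → Prop) [DecidablePred p] [DecidablePred q]
    (hpq : ∀ i, p i → ¬ q i) (hp : ∀ i j, p i → ¬ p j → M i j = 0)
    (hq : ∀ i j, q i → ¬ q j → M i j = 0) (hp₀ : ∃ i, p i) (hq₀ : ∃ i, q i) :
    X ^ 2 ∣ M.charpoly := by
  let b : ι → ℕ := fun i => if p i then 2 else if q i then 1 else 0
  have hb₂ : ∀ i, b i = 2 ↔ p i := fun i => by by_cases p i <;> by_cases q i <;> simp [b, *]
  have hb₁ : ∀ i, b i = 1 ↔ q i := fun i => by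
    by_cases hpi : p i <;> by_cases q i <;> simp [b, hpq i, *]
  have htri : M.BlockTriangular b := by
    intro i j hji
    by_cases hpi : p i
    · exact hp i j hpi fun hpj => by simp [b, hpi, hpj] at hji
    · by_cases hqi : q i
      · exact hq i j hqi fun hqj => by
          by_cases hpj : p j <;> simp [b, hpi, hqi, hqj, hpj] at hji
      · simp [b, hpi, hqi] at hji
  have h₂ : X ∣ (M.toSquareBlock b 2).charpoly :=
    X_dvd_charpoly_toSquareBlock hrow b 2 (fun i j hi hj => hp i j ((hb₂ i).1 hi) (mt (hb₂ j).2 hj))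
      (hp₀.imp fun i => (hb₂ i).2)
  have h₁ : X ∣ (M.toSquareBlock b 1).charpoly :=
    X_dvd_charpoly_toSquareBlock hrow b 1 (fun i j hi hj => hq i j ((hb₁ i).1 hi) (mt (hb₁ j).2 hj))
      (hq₀.imp fun i => (hb₁ i).2)
  have hsub : ({2, 1} : Finset ℕ) ⊆ univ.image b := by
    intro a ha
    simp only [Finset.mem_insert, Finset.mem_singleton] at ha
    rcases ha with rfl | rfl
    · exact Finset.mem_image.2 ⟨hp₀.choose, mem_univ _, (hb₂ _).2 hp₀.choose_spec⟩
    · exact Finset.mem_image.2 ⟨hq₀.choose, mem_univ _, (hb₁ _).2 hq₀.choose_spec⟩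
  rw [htri.charpoly, sq]
  refine dvd_trans ?_ (Finset.prod_dvd_prod_of_subset _ _ _ hsub)
  rw [Finset.prod_pair (by norm_num)]
  exact mul_dvd_mul h₂ h₁

variable [PartialOrder R] [Nontrivial R] {L : Matrix ι ι R}

theorem two_le_rootMultiplicity_charpoly_zero (hrow : ∀ i, ∑ j, L i j = 0)
    (hoff : ∀ i j, i ≠ j → L i j ≤ 0) {v w : ι}
    (hvw : ∀ u, Relation.ReflTransGen L.HasEdge u v → ¬ Relation.ReflTransGen L.HasEdge u w) :
    2 ≤ L.charpoly.rootMultiplicity 0 := by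
  classical
  rw [le_rootMultiplicity_iff L.charpoly_monic.ne_zero, map_zero, sub_zero]
  exact X_sq_dvd_charpoly_of_disjoint_closed hrow _ _ hvw
    (fun _ _ => eq_zero_of_reflTransGen_of_not_reflTransGen hoff)
    (fun _ _ => eq_zero_of_reflTransGen_of_not_reflTransGen hoff) ⟨v, .refl⟩ ⟨w, .refl⟩

end CommRing

section LinearOrderedField

variable [Field R] [LinearOrder R] [IsStrictOrderedRing R] {L : Matrix ι ι R}

theorem mul_sub_nonneg_of_forall_le (hoff : ∀ i j, i ≠ j → L i j ≤ 0) {x : ι → R} {i : ι}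
    (hmax : ∀ k, x k ≤ x i) (j : ι) :
    0 ≤ L i j * (x j - x i) := by
  rcases eq_or_ne i j with rfl | hij
  · simp
  · exact mul_nonneg_of_nonpos_of_nonpos (hoff i j hij) (sub_nonpos.2 (hmax j))

variable [Fintype ι]

theorem mulVec_apply_nonneg_of_forall_le (hrow : ∀ i, ∑ j, L i j = 0)
    (hoff : ∀ i j, i ≠ j → L i j ≤ 0) {x : ι → R} {i : ι} (hmax : ∀ k, x k ≤ x i) :
    0 ≤ (L *ᵥ x) i := by
  rw [mulVec_apply_eq_sum_mul_sub hrow]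
  exact Finset.sum_nonneg fun j _ => mul_sub_nonneg_of_forall_le hoff hmax j

theorem eq_zero_of_mulVec_eq_const [Nonempty ι] (hrow : ∀ i, ∑ j, L i j = 0)
    (hoff : ∀ i j, i ≠ j → L i j ≤ 0) {x : ι → R} {c : R}
    (hc : L *ᵥ x = fun _ => c) : c = 0 := by
  obtain ⟨i, hi⟩ := Finite.exists_max x
  obtain ⟨j, hj⟩ := Finite.exists_max (-x)
  have hci : 0 ≤ c := congrFun hc i ▸ mulVec_apply_nonneg_of_forall_le hrow hoff hi
  have hcj : 0 ≤ -c := by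
    simpa [mulVec_neg, hc] using mulVec_apply_nonneg_of_forall_le hrow hoff hj
  linarith

theorem apply_eq_of_lt_zero_of_forall_le (hrow : ∀ i, ∑ j, L i j = 0)
    (hoff : ∀ i j, i ≠ j → L i j ≤ 0) {x : ι → R} {i j : ι} (hx : (L *ᵥ x) i = 0)
    (hmax : ∀ k, x k ≤ x i) (hij : L i j < 0) : x j = x i := by
  rw [mulVec_apply_eq_sum_mul_sub hrow] at hx
  have := (Finset.sum_eq_zero_iff_of_nonneg fun k _ =>
    mul_sub_nonneg_of_forall_le hoff hmax k).1 hx j (mem_univ j)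
  rcases mul_eq_zero.1 this with h | h
  · exact absurd h hij.ne
  · exact sub_eq_zero.1 h

theorem apply_eq_of_reflTransGen_of_forall_le (hrow : ∀ i, ∑ j, L i j = 0)
    (hoff : ∀ i j, i ≠ j → L i j ≤ 0) {x : ι → R} (hx : L *ᵥ x = 0) {a b : ι}
    (hab : Relation.ReflTransGen L.HasEdge a b) (hmax : ∀ k, x k ≤ x b) : x a = x b := by
  induction hab using Relation.ReflTransGen.head_induction_on with
  | refl => rfl
  | head hac _ ih =>
    rw [← ih]
    exact apply_eq_of_lt_zero_of_forall_le hrow hoff (congrFun hx _) (ih ▸ hmax) hac.2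

theorem eq_apply_of_mulVec_eq_zero (hrow : ∀ i, ∑ j, L i j = 0)
    (hoff : ∀ i j, i ≠ j → L i j ≤ 0) {r : ι} (hr : ∀ j, Relation.ReflTransGen L.HasEdge r j)
    {x : ι → R} (hx : L *ᵥ x = 0) (i : ι) : x i = x r := by
  have : Nonempty ι := ⟨r⟩
  have le_root : ∀ y : ι → R, L *ᵥ y = 0 → y i ≤ y r := fun y hy => by
    obtain ⟨m, hm⟩ := Finite.exists_max y
    exact apply_eq_of_reflTransGen_of_forall_le hrow hoff hy (hr m) hm ▸ hm i
  have := le_root (-x) (by rw [mulVec_neg, hx, neg_zero])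
  simp only [Pi.neg_apply, neg_le_neg_iff] at this
  exact le_antisymm (le_root x hx) this

variable [DecidableEq ι]

theorem maxGenEigenspace_toLin'_zero_eq_span_one (hrow : ∀ i, ∑ j, L i j = 0)
    (hoff : ∀ i j, i ≠ j → L i j ≤ 0) {r : ι}
    (hr : ∀ j, Relation.ReflTransGen L.HasEdge r j) :
    Module.End.maxGenEigenspace (toLin' L) 0 = Submodule.span R {1} := by
  have : Nonempty ι := ⟨r⟩
  refine le_antisymm (fun x hx => ?_) ?_
  · obtain ⟨k, hk⟩ := (Module.End.mem_maxGenEigenspace _ _ _).1 hx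
    simp only [zero_smul, sub_zero] at hk
    clear hx
    induction k generalizing x with
    | zero => simp_all
    | succ k ih =>
      rw [pow_succ, Module.End.mul_apply] at hk
      obtain ⟨c, hc⟩ := Submodule.mem_span_singleton.1 (ih _ hk)
      have hLx : L *ᵥ x = fun _ => c := by rw [← toLin'_apply, ← hc]; ext; simp
      have hx0 : L *ᵥ x = 0 := by rw [hLx, eq_zero_of_mulVec_eq_const hrow hoff hLx]; rfl
      refine Submodule.mem_span_singleton.2 ⟨x r, funext fun i => ?_⟩
      simp [eq_apply_of_mulVec_eq_zero hrow hoff hr hx0 i]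
  · rw [Submodule.span_le, Set.singleton_subset_iff, SetLike.mem_coe,
      Module.End.mem_maxGenEigenspace]
    exact ⟨1, by simpa using mulVec_one_eq_zero hrow⟩

theorem rootMultiplicity_charpoly_zero_eq_one (hrow : ∀ i, ∑ j, L i j = 0)
    (hoff : ∀ i j, i ≠ j → L i j ≤ 0) {r : ι} (hr : ∀ j, Relation.ReflTransGen L.HasEdge r j) :
    L.charpoly.rootMultiplicity 0 = 1 := by
  rw [← charpoly_toLin', ← LinearMap.finrank_maxGenEigenspace_eq,
    maxGenEigenspace_toLin'_zero_eq_span_one hrow hoff hr, finrank_span_singleton]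
  exact fun h => one_ne_zero (congrFun h r)

end LinearOrderedField

end Matrix

/-- For the Laplacian matrix of a weighted directed graph (zero row sums,
nonpositive off-diagonal entries, with an edge (j,i) exactly when `L i j < 0`),
zero is a simple eigenvalue (algebraic multiplicity one, i.e. root multiplicity
one of the characteristic polynomial) iff the graph has a directed spanning
tree, i.e. some root has a directed path to every node. -/
theorem stmt1 {N : ℕ} (L : Matrix (Fin N) (Fin N) ℝ)
    (hrow : ∀ i, ∑ j, L i j = 0)
    (hoff : ∀ i j, i ≠ j → L i j ≤ 0) :
    L.charpoly.rootMultiplicity 0 = 1 ↔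
      ∃ r : Fin N, ∀ j : Fin N,
        Relation.ReflTransGen (fun a b => a ≠ b ∧ L b a < 0) r j := by
  constructor
  · intro h
    have : Nonempty (Fin N) := by
      by_contra hN
      have : IsEmpty (Fin N) := not_nonempty_iff.1 hN
      rw [charpoly_isEmpty, ← C_1, rootMultiplicity_C] at h
      exact zero_ne_one h
    refine Relation.exists_forall_reflTransGen fun v w => ?_
    by_contra! hvw
    have := two_le_rootMultiplicity_charpoly_zero hrow hoff hvw
    omega
  · rintro ⟨r, hr⟩
    exact rootMultiplicity_charpoly_zero_eq_one hrow hoff hr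
end

section
/- Let G be a weighted directed graph that has a directed spanning forest rooted at leader nodes L, and let F = V \ L be the follower set. Then the submatrix L_F of the Laplacian obtained by deleting the rows and columns of the leader nodes is invertible. -/
open Matrix

/-- The decidability instance that the older Mathlib found automatically. -/
noncomputable instance stmt8_followerDecidablePred {V : Type*} [Fintype V] (A : Matrix V V ℝ) :
    DecidablePred (fun v : V => ∃ j, 0 < A v j) :=
  fun _ => Fintype.decidableExistsFintype

/-- Maximum principle auxiliary lemma: if `y` vanishes on leaders and satisfies the
balance equation at every follower, then `y ≤ 0` everywhere that matters. -/
lemma stmt8_aux {V : Type*} [Fintype V] [DecidableEq V] (A : Matrix V V ℝ)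
    (hA : ∀ i j, 0 ≤ A i j)
    (hreach : ∀ i : V, (∃ j, 0 < A i j) →
      ∃ ℓ : V, (∀ j, A ℓ j = 0) ∧
        Relation.ReflTransGen (fun a b => 0 < A b a) ℓ i)
    (y : V → ℝ)
    (hl : ∀ ℓ : V, (∀ j, A ℓ j = 0) → y ℓ = 0)
    (hbal : ∀ i : V, (∃ j, 0 < A i j) → (∑ k, A i k) * y i = ∑ j, A i j * y j) :
    ∀ i, y i ≤ 0 := by
  by_contra hcon
  push_neg at hcon
  obtain ⟨i1, hi1⟩ := hcon
  -- take the maximum of y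
  obtain ⟨i0, -, hmax⟩ := Finset.exists_max_image Finset.univ y ⟨i1, Finset.mem_univ i1⟩
  set M := y i0 with hM
  have hMpos : 0 < M := lt_of_lt_of_le hi1 (hmax i1 (Finset.mem_univ i1))
  -- propagation: if y i = M and j is an in-neighbor of i, then y j = M
  have hprop : ∀ i : V, y i = M → ∀ j : V, 0 < A i j → y j = M := by
    intro i hiM j hAij
    have hfol : ∃ j, 0 < A i j := ⟨j, hAij⟩
    have hb := hbal i hfol
    rw [hiM, Finset.sum_mul] at hb
    have hle : ∀ k ∈ Finset.univ, A i k * y k ≤ A i k * M := fun k _ =>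
      mul_le_mul_of_nonneg_left (hmax k (Finset.mem_univ k)) (hA i k)
    have heq : ∀ k ∈ Finset.univ, A i k * y k = A i k * M :=
      (Finset.sum_eq_sum_iff_of_le hle).mp hb.symm
    have := heq j (Finset.mem_univ j)
    exact mul_left_cancel₀ (ne_of_gt hAij) this
  -- i0 is a follower
  have hfol0 : ∃ j, 0 < A i0 j := by
    by_contra h
    push_neg at h
    have : ∀ j, A i0 j = 0 := fun j => le_antisymm (h j) (hA i0 j)
    have := hl i0 this
    rw [← hM] at this
    exact absurd this (ne_of_gt hMpos)
  obtain ⟨ℓ, hℓ, hpath⟩ := hreach i0 hfol0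
  -- propagate along the path: y ℓ = M
  have key : ∀ c : V, Relation.ReflTransGen (fun a b => 0 < A b a) ℓ c →
      y c = M → y ℓ = M := by
    intro c hrt
    induction hrt with
    | refl => exact id
    | tail hab hbc ih =>
      intro hc
      exact ih (hprop _ hc _ hbc)
  have : y ℓ = M := key i0 hpath rfl
  rw [hl ℓ hℓ] at this
  exact absurd this.symm (ne_of_gt hMpos)

/-- Grounded Laplacian invertibility: for a weighted directed graph with
nonnegative weights (edge (j,i) iff `A i j > 0`, no self-loops), whose Laplacian
is `L i j = Σₖ A i k` if `i = j` and `-A i j` otherwise, if every follower node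
(node with an incoming edge) is reachable by a directed path from some leader
node (node with no incoming edges), then the principal submatrix of the
Laplacian indexed by the follower set is invertible. -/
theorem stmt8 {V : Type*} [Fintype V] [DecidableEq V] (A : Matrix V V ℝ)
    (hA : ∀ i j, 0 ≤ A i j) (hdiag : ∀ i, A i i = 0)
    (hreach : ∀ i : V, (∃ j, 0 < A i j) →
      ∃ ℓ : V, (∀ j, A ℓ j = 0) ∧
        Relation.ReflTransGen (fun a b => 0 < A b a) ℓ i) :
    IsUnit
      (((Matrix.of fun i j : V => if i = j then ∑ k, A i k else -(A i j)).submatrix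
          (Subtype.val : {v : V // ∃ j, 0 < A v j} → V) Subtype.val :
        Matrix {v : V // ∃ j, 0 < A v j} {v : V // ∃ j, 0 < A v j} ℝ)) := by
  classical
  set P : V → Prop := fun v => ∃ j, 0 < A v j with hP
  set L : Matrix V V ℝ :=
    Matrix.of fun i j : V => if i = j then ∑ k, A i k else -(A i j) with hL
  rw [← Matrix.mulVec_injective_iff_isUnit]
  intro x1 x2 hx
  suffices h : ∀ x : {v : V // P v} → ℝ,
      (L.submatrix (Subtype.val) Subtype.val).mulVec x = 0 → x = 0 by
    have := h (x1 - x2) (by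
      rw [Matrix.mulVec_sub, hx, sub_self])
    exact sub_eq_zero.mp this
  intro x hx0
  -- extend x by zero
  set y : V → ℝ := fun v => if h : P v then x ⟨v, h⟩ else 0 with hy
  have hyF : ∀ v : {v : V // P v}, y v.1 = x v := by
    intro v; simp [hy, v.2]
  have hyL : ∀ v : V, ¬ P v → y v = 0 := by
    intro v hv; simp [hy, hv]
  -- balance equation for y
  have hbal : ∀ i : V, P i → (∑ k, A i k) * y i = ∑ j, A i j * y j := by
    intro i hi
    have h0 : ((L.submatrix (Subtype.val) Subtype.val).mulVec x) ⟨i, hi⟩ = 0 := by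
      rw [hx0]; rfl
    rw [Matrix.mulVec, dotProduct] at h0
    have hterm : ∀ j : {v : V // P v},
        L.submatrix (Subtype.val) Subtype.val ⟨i, hi⟩ j * x j =
          (if i = j.1 then ∑ k, A i k else -(A i j.1)) * y j.1 := by
      intro j; rw [hyF]; rfl
    rw [Finset.sum_congr rfl fun j _ => hterm j] at h0
    -- extend sum to all of V
    have hsum : ∑ j : V, (if i = j then ∑ k, A i k else -(A i j)) * y j =
        ∑ j : {v // P v}, (if i = j.1 then ∑ k, A i k else -(A i j.1)) * y j.1 := by
      rw [← Fintype.sum_subtype_add_sum_subtype P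
        (fun j => (if i = j then ∑ k, A i k else -(A i j)) * y j)]
      have : ∀ j : {v // ¬ P v},
          (if i = j.1 then ∑ k, A i k else -(A i j.1)) * y j.1 = 0 := by
        intro j; rw [hyL j.1 j.2, mul_zero]
      rw [Finset.sum_congr rfl fun j _ => this j, Finset.sum_const_zero, add_zero]
    rw [← hsum] at h0
    -- split off diagonal
    have hsplit : ∑ j : V, (if i = j then ∑ k, A i k else -(A i j)) * y j =
        (∑ k, A i k) * y i - ∑ j, A i j * y j := by
      rw [Finset.sum_eq_add_sum_sdiff_singleton_of_mem (Finset.mem_univ i)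
        (fun j => (if i = j then ∑ k, A i k else -(A i j)) * y j)]
      simp only [if_pos rfl]
      have h2 : ∑ j ∈ Finset.univ \ {i}, (if i = j then ∑ k, A i k else -(A i j)) * y j =
          - ∑ j ∈ Finset.univ \ {i}, A i j * y j := by
        rw [← Finset.sum_neg_distrib]
        refine Finset.sum_congr rfl fun j hj => ?_
        rw [Finset.mem_sdiff, Finset.mem_singleton] at hj
        rw [if_neg (fun h => hj.2 h.symm), neg_mul]
      rw [h2]
      have h3 : ∑ j ∈ Finset.univ \ {i}, A i j * y j = ∑ j, A i j * y j := by
        rw [Finset.sum_eq_add_sum_sdiff_singleton_of_mem (Finset.mem_univ i)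
          (fun j => A i j * y j), hdiag i, zero_mul, zero_add]
      rw [h3]; simp only [if_true]; ring
    rw [hsplit] at h0
    linarith
  -- apply maximum principle to y and -y
  have h1 : ∀ i, y i ≤ 0 := by
    refine stmt8_aux A hA hreach y (fun ℓ hℓ => ?_) hbal
    apply hyL
    rintro ⟨j, hj⟩
    exact absurd (hℓ j) (ne_of_gt hj)
  have h2 : ∀ i, (-y) i ≤ 0 := by
    refine stmt8_aux A hA hreach (-y) (fun ℓ hℓ => ?_) (fun i hi => ?_)
    · simp only [Pi.neg_apply, neg_eq_zero]
      apply hyL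
      rintro ⟨j, hj⟩
      exact absurd (hℓ j) (ne_of_gt hj)
    · simp only [Pi.neg_apply, mul_neg]
      rw [hbal i hi, ← Finset.sum_neg_distrib]
  funext v
  have := le_antisymm (h1 v.1) (neg_nonpos.mp (h2 v.1))
  rw [hyF] at this
  rw [this]; rfl
end

section
/- Consider dynamics ẋ = -Lx over a weighted directed graph in which all follower nodes are reachable from leader nodes (the graph has a directed spanning forest rooted at the leaders). Then the state of every follower node converges as t → ∞ to a point in the convex hull of the (constant) leader node states. -/
/-!
For `s ≥ 0` the flow map `exp (-s L)` is row-stochastic, since `-L` has nonnegative off-diagonal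
entries and zero row sums. Because every node is reached from a leader along positive edges,
every row of `P = exp (-L)` puts a weight `δ > 0` on some leader, and leader states are constant.
Hence one unit of time contracts the distance to any lower bound of the leader states by the
factor `1 - δ`. Applied to `x` and `-x`, this traps the limit between the bounds on the leaders;
applied to `t ↦ x (t + s) - x t`, which vanishes on the leaders, it gives
`|x (n + s) - x n| ≤ 2 ‖x 0‖ (1 - δ) ^ n`, so `x t` converges.
-/

open Filter Topology NormedSpace
open scoped Nat

theorem exists_tendsto_of_dist_le_geometric {E : Type*} [PseudoMetricSpace E] [CompleteSpace E]
    {u : ℝ → E} {C r : ℝ} (hr0 : 0 ≤ r) (hr1 : r < 1)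
    (h : ∀ n : ℕ, ∀ s, 0 ≤ s → dist (u (n + s)) (u n) ≤ C * r ^ n) :
    ∃ c, Tendsto u atTop (𝓝 c) := by
  refine cauchySeq_tendsto_of_complete (Metric.cauchySeq_iff'.2 fun ε hε => ?_)
  have hlim : Tendsto (fun n : ℕ => C * r ^ n) atTop (𝓝 0) := by
    simpa using (tendsto_pow_atTop_nhds_zero_of_lt_one hr0 hr1).const_mul C
  obtain ⟨n, hn⟩ := (hlim.eventually (gt_mem_nhds hε)).exists
  refine ⟨n, fun t ht => ?_⟩
  have := h n (t - n) (sub_nonneg.2 ht)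
  rw [add_sub_cancel] at this
  exact this.trans_lt hn

namespace Matrix

variable {V : Type*} [Fintype V] [DecidableEq V]

theorem pow_apply_pos_of_reflTransGen {N : Matrix V V ℝ} (hN : ∀ i j, 0 ≤ N i j)
    {r : V → V → Prop} (hr : ∀ a b, r a b → 0 < N b a) {ℓ i : V}
    (h : Relation.ReflTransGen r ℓ i) : ∃ k, 0 < (N ^ k) i ℓ := by
  induction h with
  | refl => exact ⟨0, by simp⟩
  | @tail b c _ hbc ih =>
    obtain ⟨k, hk⟩ := ih
    refine ⟨k + 1, ?_⟩
    rw [pow_succ', mul_apply]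
    exact Finset.sum_pos' (fun m _ => mul_nonneg (hN c m) (pow_apply_nonneg hN k m ℓ))
      ⟨b, Finset.mem_univ _, mul_pos (hr b c hbc) hk⟩

theorem exists_add_smul_one_nonneg {M : Matrix V V ℝ} (hM : ∀ i j, i ≠ j → 0 ≤ M i j) :
    ∃ c : ℝ, (∀ i j, 0 ≤ (M + c • 1) i j) ∧ ∀ i, 0 < (M + c • 1) i i := by
  obtain ⟨c, hc⟩ : ∃ c : ℝ, ∀ i, -M i i ≤ c := Finite.exists_le _
  have hdiag : ∀ i, 0 < (M + (c + 1) • 1) i i := fun i => by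
    simp only [add_apply, smul_apply, one_apply_eq, smul_eq_mul, mul_one]
    linarith [hc i]
  refine ⟨c + 1, fun i j => ?_, hdiag⟩
  rcases eq_or_ne i j with rfl | hij
  · exact (hdiag i).le
  · simpa [one_apply_ne hij] using hM i j hij

section Exponential

attribute [local instance] Matrix.linftyOpNormedRing Matrix.linftyOpNormedAlgebra

theorem hasSum_exp_apply (M : Matrix V V ℝ) (i j : V) :
    HasSum (fun n : ℕ => (n !⁻¹ : ℝ) * (M ^ n) i j) (exp M i j) :=
  Pi.hasSum.1 (Pi.hasSum.1 (exp_series_hasSum_exp' (𝕂 := ℝ) M) i) j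

theorem exp_apply_nonneg_of_nonneg {N : Matrix V V ℝ} (hN : ∀ i j, 0 ≤ N i j) (i j : V) :
    0 ≤ exp N i j :=
  (hasSum_exp_apply N i j).nonneg fun n => mul_nonneg (by positivity) (pow_apply_nonneg hN n i j)

theorem inv_factorial_mul_pow_apply_le_exp_apply {N : Matrix V V ℝ} (hN : ∀ i j, 0 ≤ N i j)
    (k : ℕ) (i j : V) : (k !⁻¹ : ℝ) * (N ^ k) i j ≤ exp N i j :=
  le_hasSum (hasSum_exp_apply N i j) k fun n _ =>
    mul_nonneg (by positivity) (pow_apply_nonneg hN n i j)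

theorem exp_eq_real_exp_smul_exp_add_smul_one (M : Matrix V V ℝ) (c : ℝ) :
    exp M = Real.exp (-c) • exp (M + c • 1) := by
  have hscalar : exp ((-c) • (1 : Matrix V V ℝ)) = Real.exp (-c) • 1 := by
    rw [← Algebra.algebraMap_eq_smul_one]
    exact (algebraMap_exp_comm (-c)).symm.trans
      (by rw [Algebra.algebraMap_eq_smul_one, Real.exp_eq_exp_ℝ])
  calc exp M = exp ((M + c • 1) + (-c) • 1) := by rw [neg_smul, add_neg_cancel_right]
    _ = exp (M + c • 1) * exp ((-c) • 1) :=
      exp_add_of_commute _ _ ((Commute.one_right _).smul_right _)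
    _ = Real.exp (-c) • exp (M + c • 1) := by rw [hscalar, mul_smul_comm, mul_one]

theorem exp_apply_nonneg_of_offDiag_nonneg {M : Matrix V V ℝ}
    (hM : ∀ i j, i ≠ j → 0 ≤ M i j) (i j : V) : 0 ≤ exp M i j := by
  obtain ⟨c, hN, -⟩ := exists_add_smul_one_nonneg hM
  rw [exp_eq_real_exp_smul_exp_add_smul_one M c, smul_apply, smul_eq_mul]
  exact mul_nonneg (Real.exp_pos _).le (exp_apply_nonneg_of_nonneg hN i j)

theorem exp_apply_pos_of_reflTransGen {M : Matrix V V ℝ} (hM : ∀ i j, i ≠ j → 0 ≤ M i j)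
    {r : V → V → Prop} (hr : ∀ a b, r a b → a ≠ b → 0 < M b a) {ℓ i : V}
    (h : Relation.ReflTransGen r ℓ i) : 0 < exp M i ℓ := by
  obtain ⟨c, hN, hdiag⟩ := exists_add_smul_one_nonneg hM
  have hedge : ∀ a b, r a b → 0 < (M + c • 1) b a := fun a b hab => by
    rcases eq_or_ne a b with rfl | hab'
    · exact hdiag a
    · simpa [one_apply_ne hab'.symm] using hr a b hab hab'
  obtain ⟨k, hk⟩ := pow_apply_pos_of_reflTransGen hN hedge h
  rw [exp_eq_real_exp_smul_exp_add_smul_one M c, smul_apply, smul_eq_mul]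
  exact mul_pos (Real.exp_pos _) <| (by positivity : 0 < (k !⁻¹ : ℝ) * _).trans_le
    (inv_factorial_mul_pow_apply_le_exp_apply hN k i ℓ)

theorem eq_exp_smul_mulVec {M : Matrix V V ℝ} {z : ℝ → V → ℝ}
    (hz : ∀ t, HasDerivAt z (M *ᵥ z t) t) (t : ℝ) : z t = exp (t • M) *ᵥ z 0 := by
  let evalAt : Matrix V V ℝ →L[ℝ] V → ℝ := LinearMap.toContinuousLinearMap
    { toFun := fun N => N *ᵥ z 0
      map_add' := fun N N' => add_mulVec N N' _
      map_smul' := fun c N => smul_mulVec c N _ }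
  have hexp : ∀ t, HasDerivAt (fun u : ℝ => exp (u • M) *ᵥ z 0)
      (M *ᵥ (exp (t • M) *ᵥ z 0)) t := fun t => by
    rw [mulVec_mulVec]
    exact evalAt.hasFDerivAt.comp_hasDerivAt t (hasDerivAt_exp_smul_const' M t)
  have hlip : LipschitzWith _ (fun y : V → ℝ => M *ᵥ y) :=
    (LinearMap.toContinuousLinearMap (mulVecLin M)).lipschitz
  have := ODE_solution_unique_univ (v := fun _ y => M *ᵥ y) (s := fun _ => Set.univ) (t₀ := 0)
    (fun _ => hlip.lipschitzOnWith) (fun t => ⟨hz t, trivial⟩) (fun t => ⟨hexp t, trivial⟩)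
    (by simp)
  exact congrFun this t

theorem exp_smul_mulVec_eq_self {M : Matrix V V ℝ} {v : V → ℝ} (h : M *ᵥ v = 0) (t : ℝ) :
    exp (t • M) *ᵥ v = v :=
  (eq_exp_smul_mulVec (z := fun _ => v) (fun t => by simpa [h] using hasDerivAt_const t v) t).symm

end Exponential

variable {P : Matrix V V ℝ}

theorem mulVec_apply_sub_eq_sum (hP : P ∈ rowStochastic ℝ V) (z : V → ℝ) (b : ℝ) (a : V) :
    (P *ᵥ z) a - b = ∑ j, P a j * (z j - b) := by
  simp only [mul_sub, Finset.sum_sub_distrib, ← Finset.sum_mul, sum_row_of_mem_rowStochastic hP,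
    one_mul, mulVec, dotProduct]

theorem le_mulVec_apply_of_forall_le (hP : P ∈ rowStochastic ℝ V) {z : V → ℝ} {b : ℝ}
    (h : ∀ j, b ≤ z j) (a : V) : b ≤ (P *ᵥ z) a := by
  have := mulVec_apply_sub_eq_sum hP z b a
  have : 0 ≤ ∑ j, P a j * (z j - b) := Finset.sum_nonneg fun j _ =>
    mul_nonneg (nonneg_of_mem_rowStochastic hP) (sub_nonneg.2 (h j))
  linarith

theorem abs_mulVec_apply_le (hP : P ∈ rowStochastic ℝ V) {z : V → ℝ} {C : ℝ}
    (h : ∀ j, |z j| ≤ C) (a : V) : |(P *ᵥ z) a| ≤ C := by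
  have hlow := le_mulVec_apply_of_forall_le hP (fun j => (abs_le.1 (h j)).1) a
  have hupp := le_mulVec_apply_of_forall_le hP (z := -z)
    (fun j => neg_le_neg (abs_le.1 (h j)).2) a
  rw [mulVec_neg, Pi.neg_apply] at hupp
  exact abs_le.2 ⟨hlow, by linarith⟩

theorem sub_mul_le_mulVec_apply (hP : P ∈ rowStochastic ℝ V) {z : V → ℝ} {a ℓ : V} {b C δ : ℝ}
    (hδ : δ ≤ P a ℓ) (hC : 0 ≤ C) (hz : ∀ j, b - C ≤ z j) (hzℓ : b ≤ z ℓ) :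
    b - (1 - δ) * C ≤ (P *ᵥ z) a := by
  have hsum := mulVec_apply_sub_eq_sum hP z (b - C) a
  have hterm : δ * C ≤ P a ℓ * (z ℓ - (b - C)) :=
    mul_le_mul hδ (by linarith) hC (nonneg_of_mem_rowStochastic hP)
  have hsingle := Finset.single_le_sum (f := fun j => P a j * (z j - (b - C)))
    (fun j _ => mul_nonneg (nonneg_of_mem_rowStochastic hP) (sub_nonneg.2 (hz j)))
    (Finset.mem_univ ℓ)
  nlinarith

end Matrix

section LaplacianFlow

open Matrix

section Leaders

variable {V : Type*}

def IsLeader (A : Matrix V V ℝ) (ℓ : V) : Prop := ∀ j, A ℓ j = 0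

def FollowersReachableFromLeaders (A : Matrix V V ℝ) : Prop :=
  ∀ i, (∃ j, 0 < A i j) → ∃ ℓ, IsLeader A ℓ ∧ Relation.ReflTransGen (fun a b => 0 < A b a) ℓ i

end Leaders

variable {V : Type*} [Fintype V] [DecidableEq V]

def weightedLaplacian (A : Matrix V V ℝ) : Matrix V V ℝ :=
  diagonal (fun i => ∑ j, A i j) - A

def IsLaplacianFlow (A : Matrix V V ℝ) (z : ℝ → V → ℝ) : Prop :=
  ∀ t, HasDerivAt z (-weightedLaplacian A *ᵥ z t) t

variable {A : Matrix V V ℝ}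

theorem neg_weightedLaplacian_mulVec_apply (v : V → ℝ) (i : V) :
    (-weightedLaplacian A *ᵥ v) i = ∑ j, A i j * (v j - v i) := by
  rw [weightedLaplacian, neg_sub, sub_mulVec, Pi.sub_apply, mulVec_diagonal]
  simp [mulVec, dotProduct, mul_sub, Finset.sum_mul]

theorem neg_weightedLaplacian_apply_of_ne {i j : V} (h : i ≠ j) :
    (-weightedLaplacian A) i j = A i j := by
  simp [weightedLaplacian, diagonal_apply_ne _ h]

theorem exp_smul_neg_weightedLaplacian_mem_rowStochastic (hA : ∀ i j, 0 ≤ A i j) {s : ℝ}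
    (hs : 0 ≤ s) : exp (s • -weightedLaplacian A) ∈ rowStochastic ℝ V := by
  refine ⟨exp_apply_nonneg_of_offDiag_nonneg fun i j hij => ?_, exp_smul_mulVec_eq_self ?_ s⟩
  · rw [Matrix.smul_apply, neg_weightedLaplacian_apply_of_ne hij, smul_eq_mul]
    exact mul_nonneg hs (hA i j)
  · ext i
    simp [neg_weightedLaplacian_mulVec_apply]

theorem exp_smul_neg_weightedLaplacian_apply_pos (hA : ∀ i j, 0 ≤ A i j) {s : ℝ} (hs : 0 < s)
    {ℓ i : V} (h : Relation.ReflTransGen (fun a b => 0 < A b a) ℓ i) :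
    0 < exp (s • -weightedLaplacian A) i ℓ := by
  refine exp_apply_pos_of_reflTransGen (fun a b hab => ?_) (fun a b hab hne => ?_) h
  · rw [Matrix.smul_apply, neg_weightedLaplacian_apply_of_ne hab, smul_eq_mul]
    exact mul_nonneg hs.le (hA a b)
  · rw [Matrix.smul_apply, neg_weightedLaplacian_apply_of_ne hne.symm, smul_eq_mul]
    exact mul_pos hs hab

theorem exists_forall_exists_isLeader_le_exp (hA : ∀ i j, 0 ≤ A i j)
    (hreach : FollowersReachableFromLeaders A) :
    ∃ δ : ℝ, 0 < δ ∧ δ ≤ 1 ∧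
      ∀ a, ∃ ℓ, IsLeader A ℓ ∧ δ ≤ exp (-weightedLaplacian A) a ℓ := by
  have hpos : ∀ a, ∃ ℓ, IsLeader A ℓ ∧ 0 < exp (-weightedLaplacian A) a ℓ := by
    intro a
    by_cases ha : IsLeader A a
    · exact ⟨a, ha, by simpa using exp_smul_neg_weightedLaplacian_apply_pos hA one_pos .refl⟩
    · obtain ⟨j, hj⟩ := not_forall.1 ha
      obtain ⟨ℓ, hℓ, hpath⟩ := hreach a ⟨j, (hA a j).lt_of_ne' hj⟩
      exact ⟨ℓ, hℓ, by simpa using exp_smul_neg_weightedLaplacian_apply_pos hA one_pos hpath⟩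
  choose ℓ hℓ hℓpos using hpos
  have hsmall : ∀ᶠ δ in 𝓝[>] (0 : ℝ), δ ≤ 1 ∧ ∀ a, δ ≤ exp (-weightedLaplacian A) a (ℓ a) :=
    nhdsWithin_le_nhds <|
      (eventually_le_nhds one_pos).and (eventually_all.2 fun a => eventually_le_nhds (hℓpos a))
  obtain ⟨δ, ⟨hδ1, hδ⟩, hδ0⟩ := (hsmall.and self_mem_nhdsWithin).exists
  exact ⟨δ, hδ0, hδ1, fun a => ⟨ℓ a, hℓ a, hδ a⟩⟩

theorem isLaplacianFlow_of_hasDerivAt_apply {x : ℝ → V → ℝ}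
    (hx : ∀ i t, HasDerivAt (fun s => x s i) (∑ j, A i j * (x t j - x t i)) t) :
    IsLaplacianFlow A x := fun t =>
  hasDerivAt_pi.2 fun i => by simpa only [neg_weightedLaplacian_mulVec_apply] using hx i t

namespace IsLaplacianFlow

variable {z w : ℝ → V → ℝ}

theorem neg (hz : IsLaplacianFlow A z) : IsLaplacianFlow A (-z) := fun t => by
  simpa [mulVec_neg] using (hz t).neg

theorem sub (hz : IsLaplacianFlow A z) (hw : IsLaplacianFlow A w) :
    IsLaplacianFlow A (z - w) := fun t => by
  simpa [mulVec_sub] using (hz t).sub (hw t)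

theorem comp_add_const (hz : IsLaplacianFlow A z) (s : ℝ) :
    IsLaplacianFlow A (fun t => z (t + s)) := fun t =>
  (hz (t + s)).comp_add_const t s

theorem add_eq_exp_smul_mulVec (hz : IsLaplacianFlow A z) (t s : ℝ) :
    z (t + s) = exp (s • -weightedLaplacian A) *ᵥ z t := by
  simpa [add_comm] using eq_exp_smul_mulVec (hz.comp_add_const t) s

theorem apply_eq_of_isLeader (hz : IsLaplacianFlow A z) {ℓ : V} (hℓ : IsLeader A ℓ) (s t : ℝ) :
    z s ℓ = z t ℓ := by
  have hderiv : ∀ t, HasDerivAt (fun u => z u ℓ) 0 t := fun t => by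
    simpa [neg_weightedLaplacian_mulVec_apply, show ∀ j, A ℓ j = 0 from hℓ]
      using hasDerivAt_pi.1 (hz t) ℓ
  exact is_const_of_deriv_eq_zero (fun t => (hderiv t).differentiableAt)
    (fun t => (hderiv t).deriv) s t

theorem abs_apply_le (hA : ∀ i j, 0 ≤ A i j) (hz : IsLaplacianFlow A z) {t s C : ℝ}
    (hC : ∀ j, |z t j| ≤ C) (hs : 0 ≤ s) (j : V) : |z (t + s) j| ≤ C := by
  rw [hz.add_eq_exp_smul_mulVec]
  exact abs_mulVec_apply_le (exp_smul_neg_weightedLaplacian_mem_rowStochastic hA hs) hC j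

theorem sub_pow_mul_le (hA : ∀ i j, 0 ≤ A i j) (hz : IsLaplacianFlow A z) {δ b C t : ℝ}
    (hδ1 : δ ≤ 1) (hδ : ∀ a, ∃ ℓ, IsLeader A ℓ ∧ δ ≤ exp (-weightedLaplacian A) a ℓ)
    (hC : 0 ≤ C) (hlead : ∀ ℓ, IsLeader A ℓ → b ≤ z t ℓ) (hzt : ∀ j, b - C ≤ z t j)
    (n : ℕ) (j : V) : b - (1 - δ) ^ n * C ≤ z (t + n) j := by
  induction n generalizing j with
  | zero => simpa using hzt j
  | succ n ih =>
    obtain ⟨ℓ, hℓ, hδℓ⟩ := hδ j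
    have hstep := hz.add_eq_exp_smul_mulVec (t + n) 1
    rw [one_smul] at hstep
    rw [Nat.cast_succ, ← add_assoc, hstep, pow_succ', mul_assoc]
    refine sub_mul_le_mulVec_apply (by simpa using
      exp_smul_neg_weightedLaplacian_mem_rowStochastic hA zero_le_one) hδℓ
      (mul_nonneg (pow_nonneg (sub_nonneg.2 hδ1) n) hC) ih ?_
    rw [hz.apply_eq_of_isLeader hℓ (t + n) t]
    exact hlead ℓ hℓ

theorem abs_le_pow_mul (hA : ∀ i j, 0 ≤ A i j) (hz : IsLaplacianFlow A z) {δ C t : ℝ}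
    (hδ1 : δ ≤ 1) (hδ : ∀ a, ∃ ℓ, IsLeader A ℓ ∧ δ ≤ exp (-weightedLaplacian A) a ℓ)
    (hlead : ∀ ℓ, IsLeader A ℓ → z t ℓ = 0) (hzt : ∀ j, |z t j| ≤ C) (n : ℕ) (j : V) :
    |z (t + n) j| ≤ (1 - δ) ^ n * C := by
  have hC : 0 ≤ C := (abs_nonneg _).trans (hzt j)
  have hlow := hz.sub_pow_mul_le hA hδ1 hδ hC (b := 0) (fun ℓ hℓ => (hlead ℓ hℓ).ge)
    (fun j => by linarith [neg_abs_le (z t j), hzt j]) n j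
  have hupp := hz.neg.sub_pow_mul_le hA hδ1 hδ hC (b := 0) (t := t)
    (fun ℓ hℓ => by simp [hlead ℓ hℓ])
    (fun j => by simpa using (le_abs_self (z t j)).trans (hzt j)) n j
  simp only [Pi.neg_apply] at hupp
  exact abs_le.2 ⟨by linarith, by linarith⟩

theorem exists_tendsto (hA : ∀ i j, 0 ≤ A i j) (hreach : FollowersReachableFromLeaders A)
    (hz : IsLaplacianFlow A z) (i : V) : ∃ c, Tendsto (fun t => z t i) atTop (𝓝 c) := by
  obtain ⟨δ, hδ0, hδ1, hδ⟩ := exists_forall_exists_isLeader_le_exp hA hreach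
  obtain ⟨K, hK⟩ : ∃ K, ∀ j, |z 0 j| ≤ K := Finite.exists_le _
  refine exists_tendsto_of_dist_le_geometric (C := 2 * K) (sub_nonneg.2 hδ1) (by linarith)
    fun n s hs => ?_
  have hdiff := (hz.comp_add_const s).sub hz
  have := hdiff.abs_le_pow_mul hA hδ1 hδ (t := 0) (C := 2 * K)
    (fun ℓ hℓ => by simp [hz.apply_eq_of_isLeader hℓ s 0])
    (fun j => by
      have := hz.abs_apply_le hA hK hs j
      rw [zero_add] at this
      simp only [Pi.sub_apply, zero_add]
      linarith [abs_sub (z s j) (z 0 j), hK j]) n i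
  rw [Real.dist_eq]
  simpa [add_comm, mul_comm] using this

theorem le_of_tendsto (hA : ∀ i j, 0 ≤ A i j) (hreach : FollowersReachableFromLeaders A)
    (hz : IsLaplacianFlow A z) {b c : ℝ} {i : V} (hb : ∀ ℓ, IsLeader A ℓ → b ≤ z 0 ℓ)
    (hc : Tendsto (fun t => z t i) atTop (𝓝 c)) : b ≤ c := by
  obtain ⟨δ, hδ0, hδ1, hδ⟩ := exists_forall_exists_isLeader_le_exp hA hreach
  obtain ⟨K, hK⟩ : ∃ K, ∀ j, b - z 0 j ≤ K := Finite.exists_le _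
  have hbound := hz.sub_pow_mul_le hA hδ1 hδ (le_max_right K 0) hb
    (fun j => by linarith [hK j, le_max_left K 0])
  have hlim : Tendsto (fun n : ℕ => z n i + (1 - δ) ^ n * max K 0) atTop (𝓝 (c + 0)) :=
    (hc.comp tendsto_natCast_atTop_atTop).add <| by
      simpa using (tendsto_pow_atTop_nhds_zero_of_lt_one (sub_nonneg.2 hδ1) (by linarith)).mul_const
        (max K 0)
  rw [add_zero] at hlim
  exact ge_of_tendsto' hlim fun n => by
    have := hbound n i
    rw [zero_add] at this
    linarith

end IsLaplacianFlow

end LaplacianFlow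

/-- Containment: dynamics `ẋᵢ = Σⱼ aᵢⱼ (xⱼ - xᵢ)` over a weighted directed graph
(edge (j,i) iff `A i j > 0`; a leader is a node with no incoming edge, i.e.
`∀ j, A i j = 0`, so its state is constant). If every follower is reachable from
some leader, then every node's state converges, and the limit lies in the convex
hull of the leaders' (constant) states, i.e. between every lower bound and every
upper bound of the leader states. -/
theorem stmt9 {V : Type*} [Fintype V] (A : Matrix V V ℝ)
    (hA : ∀ i j, 0 ≤ A i j)
    (hreach : ∀ i : V, (∃ j, 0 < A i j) →
      ∃ ℓ : V, (∀ j, A ℓ j = 0) ∧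
        Relation.ReflTransGen (fun a b => 0 < A b a) ℓ i)
    (x : ℝ → V → ℝ)
    (hx : ∀ (i : V) (t : ℝ),
      HasDerivAt (fun s => x s i) (∑ j, A i j * (x t j - x t i)) t) :
    ∀ i : V, ∃ c : ℝ, Tendsto (fun t => x t i) atTop (𝓝 c) ∧
      (∀ lb : ℝ, (∀ ℓ, (∀ j, A ℓ j = 0) → lb ≤ x 0 ℓ) → lb ≤ c) ∧
      (∀ ub : ℝ, (∀ ℓ, (∀ j, A ℓ j = 0) → x 0 ℓ ≤ ub) → c ≤ ub) := by
  classical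
  intro i
  have hflow := isLaplacianFlow_of_hasDerivAt_apply hx
  obtain ⟨c, hc⟩ := hflow.exists_tendsto hA hreach i
  refine ⟨c, hc, fun lb hlb => hflow.le_of_tendsto hA hreach hlb hc, fun ub hub => ?_⟩
  have := hflow.neg.le_of_tendsto hA hreach (b := -ub) (fun ℓ hℓ => neg_le_neg (hub ℓ hℓ)) hc.neg
  exact neg_le_neg_iff.1 this
end

section
/- Let S be a subset of nodes of a weighted directed graph such that G[S] has a directed spanning tree with root r, and such that r is the only node of S with incoming edges from V \ S. If the states of all nodes outside S converge to constants x_j^ss, then the states of all nodes in S under ẋ = -Lx converge to the common value (Σ_{j ∈ V\S} a_{rj} x_j^ss) / (Σ_{j ∈ V\S} a_{rj}), where the sums range over neighbors of r outside S. -/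
/-!
The root only listens to nodes outside `S`, so it obeys the scalar equation
`ẋ_r = u(t) - c x_r` with `c = Σ_{j∉S} a_rj` and a forcing `u → Σ_{j∉S} a_rj xss j`; a Grönwall
comparison gives `x_r → L := (Σ_{j∉S} a_rj xss j) / c`. Inside `S` the other nodes run a
leader–follower consensus with leader `r`. Once `x_r ≤ ε`, freezing the root at `ε` makes the
maximum of the states over `S` non-increasing, so the followers are eventually bounded by some `D`.
Along a path `r → ⋯ → i` each edge transmits a definite fraction of the gap `D - ε`, so every node
eventually drops below `D - κ (D - ε)` for a uniform `κ > 0`; iterating this contraction pushes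
the eventual bound down to `ε`. Applying this to `x` and `-x` gives convergence to `L`.
-/

open Filter Topology Set

theorem eventually_lt_of_hasDerivAt_le_mul_sub {y y' : ℝ → ℝ} {c b : ℝ} (hc : 0 < c)
    (hy : ∀ t, HasDerivAt y (y' t) t) (hle : ∀ᶠ t in atTop, y' t ≤ c * (b - y t)) :
    ∀ b' > b, ∀ᶠ t in atTop, y t < b' := by
  intro b' hb'
  obtain ⟨T, hT⟩ := eventually_atTop.1 hle
  have hgronwall : ∀ t ≥ T, y t - b ≤ (y T - b) * Real.exp (-c * (t - T)) := by
    intro t ht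
    rw [← gronwallBound_ε0]
    refine le_gronwallBound_of_liminf_deriv_right_le (f := fun t => y t - b) (f' := y')
      (a := T) (b := t)
      (fun s _ => ((hy s).sub_const b).continuousAt.continuousWithinAt)
      (fun s _ ρ hρ => ?_) le_rfl (fun s hs => ?_) t ⟨ht, le_rfl⟩
    · simpa only [slope_def_module, smul_eq_mul] using
        ((hy s).sub_const b).hasDerivWithinAt.liminf_right_slope_le hρ
    · linarith [hT s hs.1]
  have hdecay : Tendsto (fun t => (y T - b) * Real.exp (-c * (t - T))) atTop (𝓝 0) := by
    have : Tendsto (fun t => -c * (t - T)) atTop atBot :=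
      (tendsto_atTop_add_const_right _ (-T) tendsto_id).const_mul_atTop_of_neg (by linarith)
    simpa using (Real.tendsto_exp_atBot.comp this).const_mul (y T - b)
  filter_upwards [hdecay.eventually_lt_const (sub_pos.2 hb'), eventually_ge_atTop T]
    with t hsmall ht
  linarith [hgronwall t ht]

theorem antitoneOn_finset_sup'_of_hasDerivAt_nonpos {ι : Type*} {s : Finset ι}
    (hs : s.Nonempty) {w w' : ι → ℝ → ℝ}
    (hw : ∀ i ∈ s, ∀ t, HasDerivAt (w i) (w' i t) t)
    {a : ℝ} (hmax : ∀ t ≥ a, ∀ i ∈ s, (∀ j ∈ s, w j t ≤ w i t) → w' i t ≤ 0) :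
    AntitoneOn (fun t => s.sup' hs (w · t)) (Ici a) := by
  set m := fun t => s.sup' hs (w · t)
  have hm : Continuous m :=
    Continuous.finset_sup'_apply hs fun i hi =>
      continuous_iff_continuousAt.2 fun t => (hw i hi t).continuousAt
  intro t₁ ht₁ t₂ _ ht
  refine image_le_of_liminf_slope_right_le_deriv_boundary (B := fun _ => m t₁) (B' := 0)
    hm.continuousOn le_rfl continuousOn_const (fun _ _ => hasDerivWithinAt_const _ _ _)
    (fun x hx ρ hρ => Eventually.frequently ?_) ⟨ht, le_rfl⟩
  have hxa : a ≤ x := le_trans ht₁ hx.1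
  -- inactive indices stay below `m x` by continuity, active ones by their derivative
  have hlt : ∀ i ∈ s, ∀ᶠ z in 𝓝[>] x, w i z < m x + ρ * (z - x) := by
    intro i hi
    rcases (Finset.le_sup' (fun j => w j x) hi).lt_or_eq with hlt | heq
    · refine nhdsWithin_le_nhds (ContinuousAt.eventually_lt (hw i hi x).continuousAt ?_ ?_)
      · fun_prop
      · simpa using hlt
    · have hder : w' i x < ρ := lt_of_le_of_lt
        (hmax x hxa i hi fun j hj => heq ▸ Finset.le_sup' (fun j => w j x) hj) hρ
      filter_upwards [(hw i hi x).hasDerivWithinAt.limsup_slope_le' (lt_irrefl x) hder,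
        self_mem_nhdsWithin] with z hz hxz
      rw [slope_def_field, div_lt_iff₀ (sub_pos.2 hxz)] at hz
      change w i x = m x at heq
      linarith
  filter_upwards [(eventually_all_finset s).2 hlt, self_mem_nhdsWithin] with z hz hxz
  rw [slope_def_field, div_lt_iff₀ (sub_pos.2 hxz)]
  have := (Finset.sup'_lt_iff hs).2 hz
  linarith

theorem tendsto_of_hasDerivAt_sub_mul {y u : ℝ → ℝ} {c l : ℝ} (hc : 0 < c)
    (hy : ∀ t, HasDerivAt y (u t - c * y t) t) (hu : Tendsto u atTop (𝓝 (c * l))) :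
    Tendsto y atTop (𝓝 l) := by
  refine tendsto_order.2 ⟨fun b hb => ?_, fun b hb => ?_⟩
  · obtain ⟨b', hbb', hb'l⟩ := exists_between hb
    have hneg : ∀ t, HasDerivAt (fun t => -y t) (-u t - c * -y t) t := fun t =>
      (hy t).neg.congr_deriv (by ring)
    have hu' : ∀ᶠ t in atTop, -u t - c * -y t ≤ c * (-b' - -y t) := by
      filter_upwards [hu.eventually (eventually_gt_nhds ((mul_lt_mul_iff_right₀ hc).2 hb'l))]
        with t ht
      linarith
    filter_upwards [eventually_lt_of_hasDerivAt_le_mul_sub hc hneg hu' (-b) (neg_lt_neg hbb')]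
      with t ht
    linarith
  · obtain ⟨b', hlb', hb'b⟩ := exists_between hb
    have hu' : ∀ᶠ t in atTop, u t - c * y t ≤ c * (b' - y t) := by
      filter_upwards [hu.eventually (eventually_lt_nhds ((mul_lt_mul_iff_right₀ hc).2 hlb'))]
        with t ht
      linarith
    exact eventually_lt_of_hasDerivAt_le_mul_sub hc hy hu' b hb'b

theorem exists_lt_of_contraction {P : ℝ → Prop} {ε κ D₀ : ℝ} (hκ₀ : 0 < κ)
    (hκ₁ : κ ≤ 1) (hD₀ : ε ≤ D₀) (h₀ : P D₀)
    (hstep : ∀ D, ε ≤ D → P D → P (D - κ * (D - ε))) : ∀ b > ε, ∃ D < b, P D := by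
  have hiter : ∀ n : ℕ, P (ε + (1 - κ) ^ n * (D₀ - ε)) := by
    intro n
    induction n with
    | zero => simpa using h₀
    | succ n ih =>
      have hle : ε ≤ ε + (1 - κ) ^ n * (D₀ - ε) :=
        le_add_of_nonneg_right (mul_nonneg (pow_nonneg (by linarith) n) (by linarith))
      convert hstep _ hle ih using 1
      ring
  intro b hb
  have hlim :
      Tendsto (fun n : ℕ => ε + (1 - κ) ^ n * (D₀ - ε)) atTop (𝓝 (ε + 0 * (D₀ - ε))) :=
    ((tendsto_pow_atTop_nhds_zero_of_lt_one (by linarith) (by linarith)).mul_const _).const_add ε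
  rw [zero_mul, add_zero] at hlim
  obtain ⟨n, hn⟩ := (hlim.eventually (eventually_lt_nhds hb)).exists
  exact ⟨_, hn, hiter n⟩

section LeaderFollower

variable {V : Type*} {A : Matrix V V ℝ} {S : Finset V} {r : V} {x : ℝ → V → ℝ} {ε : ℝ}

def IsLeaderFollowerSolution (A : Matrix V V ℝ) (S : Finset V) (r : V) (x : ℝ → V → ℝ) : Prop :=
  ∀ i ∈ S, i ≠ r → ∀ t,
    HasDerivAt (fun s => x s i) (∑ j ∈ S, A i j * (x t j - x t i)) t

theorem IsLeaderFollowerSolution.neg (hx : IsLeaderFollowerSolution A S r x) :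
    IsLeaderFollowerSolution A S r (fun t i => -x t i) := fun i hi hir t =>
  (hx i hi hir t).neg.congr_deriv <| by
    rw [← Finset.sum_neg_distrib]
    exact Finset.sum_congr rfl fun j _ => by ring

theorem IsLeaderFollowerSolution.exists_eventually_le (hA : ∀ i j, 0 ≤ A i j)
    (hx : IsLeaderFollowerSolution A S r x) (hr : r ∈ S) (hre : ∀ᶠ t in atTop, x t r ≤ ε) :
    ∃ D, ε ≤ D ∧ ∀ᶠ t in atTop, ∀ i ∈ S, x t i ≤ D := by
  classical
  obtain ⟨T, hT⟩ := eventually_atTop.1 hre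
  set v : V → ℝ → ℝ := fun i t => if i = r then ε else x t i
  set v' : V → ℝ → ℝ := fun i t => if i = r then 0 else ∑ j ∈ S, A i j * (x t j - x t i)
  have hxv : ∀ t ≥ T, ∀ j ∈ S, x t j ≤ v j t := by
    intro t ht j _
    by_cases hjr : j = r
    · subst hjr; simpa [v] using hT t ht
    · simp [v, hjr]
  have hv : ∀ i ∈ S, ∀ t, HasDerivAt (v i) (v' i t) t := by
    intro i hi t
    by_cases hir : i = r
    · simpa [v, v', hir] using hasDerivAt_const t ε
    · simpa [v, v', hir] using hx i hi hir t
  have hmax : ∀ t ≥ T, ∀ i ∈ S, (∀ j ∈ S, v j t ≤ v i t) → v' i t ≤ 0 := by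
    intro t ht i _ hi_max
    by_cases hir : i = r
    · simp [v', hir]
    · simp only [v', if_neg hir]
      refine Finset.sum_nonpos fun j hj => mul_nonpos_of_nonneg_of_nonpos (hA i j) ?_
      have := (hxv t ht j hj).trans (hi_max j hj)
      simp only [v, if_neg hir] at this
      linarith
  have hanti := antitoneOn_finset_sup'_of_hasDerivAt_nonpos ⟨r, hr⟩ hv hmax
  refine ⟨S.sup' ⟨r, hr⟩ (v · T), by simpa [v] using Finset.le_sup' (v · T) hr, ?_⟩
  filter_upwards [eventually_ge_atTop T] with t ht i hi
  exact (hxv t ht i hi).trans <|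
    (Finset.le_sup' (v · t) hi).trans (hanti self_mem_Ici ht ht)

theorem IsLeaderFollowerSolution.eventually_lt_of_edge (hA : ∀ i j, 0 ≤ A i j)
    (hx : IsLeaderFollowerSolution A S r x) {p q : V} (hp : p ∈ S) (hq : q ∈ S) (hqr : q ≠ r)
    (hqp : 0 < A q p) {D B : ℝ} (hD : ∀ᶠ t in atTop, ∀ j ∈ S, x t j ≤ D)
    (hB : ∀ᶠ t in atTop, x t p ≤ B) :
    ∀ b > D - A q p / (∑ j ∈ S, A q j) * (D - B), ∀ᶠ t in atTop, x t q < b := by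
  set c := ∑ j ∈ S, A q j
  have hc : 0 < c := Finset.sum_pos' (fun j _ => hA q j) ⟨p, hp, hqp⟩
  refine eventually_lt_of_hasDerivAt_le_mul_sub hc (hx q hq hqr) ?_
  filter_upwards [hD, hB] with t hDt hBt
  have hsplit : ∑ j ∈ S, A q j * (x t j - x t q)
      = c * (D - x t q) - ∑ j ∈ S, A q j * (D - x t j) := by
    simp only [c, Finset.sum_mul, ← Finset.sum_sub_distrib]
    exact Finset.sum_congr rfl fun j _ => by ring
  have hp_term : A q p * (D - x t p) ≤ ∑ j ∈ S, A q j * (D - x t j) :=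
    Finset.single_le_sum (f := fun j => A q j * (D - x t j))
      (fun j hj => mul_nonneg (hA q j) (sub_nonneg.2 (hDt j hj))) hp
  have hB_term : A q p * (D - B) ≤ A q p * (D - x t p) :=
    mul_le_mul_of_nonneg_left (by linarith) hqp.le
  have htarget : c * (D - A q p / c * (D - B) - x t q) = c * (D - x t q) - A q p * (D - B) := by
    field_simp
    ring
  linarith

theorem IsLeaderFollowerSolution.exists_contraction_of_reflTransGen (hA : ∀ i j, 0 ≤ A i j)
    (hx : IsLeaderFollowerSolution A S r x) (hre : ∀ᶠ t in atTop, x t r ≤ ε) {i : V}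
    (hi : Relation.ReflTransGen (fun a b => a ∈ S ∧ b ∈ S ∧ 0 < A b a) r i) :
    ∃ κ > 0, ∀ D ≥ ε, (∀ᶠ t in atTop, ∀ j ∈ S, x t j ≤ D) →
      ∀ᶠ t in atTop, x t i ≤ D - κ * (D - ε) := by
  have hbase : ∃ κ > 0, ∀ D ≥ ε, (∀ᶠ t in atTop, ∀ j ∈ S, x t j ≤ D) →
      ∀ᶠ t in atTop, x t r ≤ D - κ * (D - ε) :=
    ⟨1, one_pos, fun D _ _ => by filter_upwards [hre] with t ht; linarith⟩
  induction hi with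
  | refl => exact hbase
  | @tail p q _ hedge ih =>
    obtain ⟨hp, hq, hqp⟩ := hedge
    obtain ⟨κ, hκ, hκp⟩ := ih
    by_cases hqr : q = r
    · exact hqr ▸ hbase
    have hc : 0 < ∑ j ∈ S, A q j := Finset.sum_pos' (fun j _ => hA q j) ⟨p, hp, hqp⟩
    set θ := A q p / ∑ j ∈ S, A q j
    have hθ : 0 < θ := div_pos hqp hc
    refine ⟨θ * κ / 2, by positivity, fun D hD hall => ?_⟩
    rcases hD.eq_or_lt with rfl | hεD
    · filter_upwards [hall] with t ht
      simpa using ht q hq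
    have hgap : 0 < θ * κ * (D - ε) := by have := sub_pos.2 hεD; positivity
    filter_upwards [hx.eventually_lt_of_edge hA hp hq hqr hqp hall (hκp D hD hall)
      (D - θ * κ / 2 * (D - ε)) (by linarith)] with t ht
    exact ht.le

theorem IsLeaderFollowerSolution.exists_uniform_contraction (hA : ∀ i j, 0 ≤ A i j)
    (hx : IsLeaderFollowerSolution A S r x) (hr : r ∈ S)
    (hroot : ∀ j ∈ S, Relation.ReflTransGen (fun a b => a ∈ S ∧ b ∈ S ∧ 0 < A b a) r j)
    (hre : ∀ᶠ t in atTop, x t r ≤ ε) :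
    ∃ κ, 0 < κ ∧ κ ≤ 1 ∧ ∀ D ≥ ε, (∀ᶠ t in atTop, ∀ j ∈ S, x t j ≤ D) →
      ∀ᶠ t in atTop, ∀ j ∈ S, x t j ≤ D - κ * (D - ε) := by
  choose! κ hκ_pos hκ using fun i hi =>
    hx.exists_contraction_of_reflTransGen hA hre (hroot i hi)
  refine ⟨min 1 (S.inf' ⟨r, hr⟩ κ), lt_min one_pos ((Finset.lt_inf'_iff _).2 hκ_pos),
    min_le_left _ _, fun D hD hall => (eventually_all_finset S).2 fun i hi => ?_⟩
  have hκ_le : min 1 (S.inf' ⟨r, hr⟩ κ) ≤ κ i :=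
    (min_le_right _ _).trans (Finset.inf'_le _ hi)
  filter_upwards [hκ i hi D hD hall] with t ht
  nlinarith [mul_le_mul_of_nonneg_right hκ_le (sub_nonneg.2 hD)]

theorem IsLeaderFollowerSolution.eventually_lt_of_root_eventually_le (hA : ∀ i j, 0 ≤ A i j)
    (hx : IsLeaderFollowerSolution A S r x) (hr : r ∈ S)
    (hroot : ∀ j ∈ S, Relation.ReflTransGen (fun a b => a ∈ S ∧ b ∈ S ∧ 0 < A b a) r j)
    (hre : ∀ᶠ t in atTop, x t r ≤ ε) :
    ∀ b > ε, ∀ᶠ t in atTop, ∀ i ∈ S, x t i < b := by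
  intro b hb
  obtain ⟨D₀, hεD₀, hD₀⟩ := hx.exists_eventually_le hA hr hre
  obtain ⟨κ, hκ₀, hκ₁, hκ⟩ := hx.exists_uniform_contraction hA hr hroot hre
  obtain ⟨D, hDb, hD⟩ := exists_lt_of_contraction hκ₀ hκ₁ hεD₀ hD₀ hκ b hb
  filter_upwards [hD] with t ht i hi
  exact (ht i hi).trans_lt hDb

theorem IsLeaderFollowerSolution.tendsto_of_tendsto_root (hA : ∀ i j, 0 ≤ A i j)
    (hx : IsLeaderFollowerSolution A S r x) (hr : r ∈ S)
    (hroot : ∀ j ∈ S, Relation.ReflTransGen (fun a b => a ∈ S ∧ b ∈ S ∧ 0 < A b a) r j)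
    {l : ℝ} (hxr : Tendsto (fun t => x t r) atTop (𝓝 l)) :
    ∀ i ∈ S, Tendsto (fun t => x t i) atTop (𝓝 l) := by
  intro i hi
  refine tendsto_order.2 ⟨fun b hb => ?_, fun b hb => ?_⟩
  · obtain ⟨ε, hbε, hεl⟩ := exists_between hb
    have hre : ∀ᶠ t in atTop, -x t r ≤ -ε := by
      filter_upwards [hxr.eventually (eventually_gt_nhds hεl)] with t ht
      linarith
    filter_upwards [hx.neg.eventually_lt_of_root_eventually_le hA hr hroot hre (-b)
      (neg_lt_neg hbε)] with t ht
    linarith [ht i hi]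
  · obtain ⟨ε, hlε, hεb⟩ := exists_between hb
    have hre : ∀ᶠ t in atTop, x t r ≤ ε := hxr.eventually (eventually_le_nhds hlε)
    filter_upwards [hx.eventually_lt_of_root_eventually_le hA hr hroot hre b hεb] with t ht
    exact ht i hi

end LeaderFollower

/-- Let `S` be a node set whose induced subgraph has a directed spanning tree
rooted at `r` (with `r` having no incoming edges from within `S`), `r` being the
only node of `S` with incoming edges from outside `S` (and having at least one).
If the states of the nodes outside `S` converge to constants `xss j`, then under
`ẋᵢ = Σⱼ aᵢⱼ (xⱼ - xᵢ)` every node of `S` converges to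
`(Σ_{j∉S} a_{rj} xss j) / (Σ_{j∉S} a_{rj})`. -/
theorem stmt10 {V : Type*} [Fintype V] [DecidableEq V] (A : Matrix V V ℝ)
    (hA : ∀ i j, 0 ≤ A i j)
    (S : Finset V) (r : V) (hr : r ∈ S)
    (hroot : ∀ j ∈ S,
      Relation.ReflTransGen (fun a b => a ∈ S ∧ b ∈ S ∧ 0 < A b a) r j)
    (hrNoInS : ∀ j ∈ S, A r j = 0)
    (honly : ∀ i ∈ S, i ≠ r → ∀ j, j ∉ S → A i j = 0)
    (hrOut : ∃ j, j ∉ S ∧ 0 < A r j)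
    (x : ℝ → V → ℝ)
    (hx : ∀ (i : V) (t : ℝ),
      HasDerivAt (fun s => x s i) (∑ j, A i j * (x t j - x t i)) t)
    (xss : V → ℝ)
    (hconv : ∀ j, j ∉ S → Tendsto (fun t => x t j) atTop (𝓝 (xss j))) :
    ∀ i ∈ S, Tendsto (fun t => x t i) atTop
      (𝓝 ((∑ j ∈ Finset.univ.filter (fun j => j ∉ S), A r j * xss j) /
          (∑ j ∈ Finset.univ.filter (fun j => j ∉ S), A r j))) := by
  set N := Finset.univ.filter (fun j => j ∉ S)
  set c := ∑ j ∈ N, A r j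
  have hc : 0 < c := by
    obtain ⟨j, hjS, hj⟩ := hrOut
    exact Finset.sum_pos' (fun j _ => hA r j)
      ⟨j, Finset.mem_filter.2 ⟨Finset.mem_univ j, hjS⟩, hj⟩
  have hroot_ode :
      ∀ t, HasDerivAt (fun s => x s r) ((∑ j ∈ N, A r j * x t j) - c * x t r) t := by
    intro t
    refine (hx r t).congr_deriv ?_
    rw [← Finset.sum_filter_of_ne (p := fun j => j ∉ S) fun j _ hj hjS => hj (by
      rw [hrNoInS j hjS, zero_mul]), mul_comm c, Finset.mul_sum,
      ← Finset.sum_sub_distrib]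
    exact Finset.sum_congr rfl fun j _ => by ring
  have hinput : Tendsto (fun t => ∑ j ∈ N, A r j * x t j) atTop
      (𝓝 (c * ((∑ j ∈ N, A r j * xss j) / c))) := by
    rw [mul_div_cancel₀ _ hc.ne']
    exact tendsto_finsetSum _ fun j hj => (hconv j (Finset.mem_filter.1 hj).2).const_mul _
  have hfollow : IsLeaderFollowerSolution A S r x := fun i hi hir t => by
    rw [Finset.sum_subset (Finset.subset_univ S) fun j _ hjS => by
      rw [honly i hi hir j hjS, zero_mul]]
    exact hx i t
  exact hfollow.tendsto_of_tendsto_root hA hr hroot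
    (tendsto_of_hasDerivAt_sub_mul hc hroot_ode hinput)
end

section
/- For the network ẋ = -Lx over the LSCC condensation of a directed graph: (a) every node with no incoming edge is a cluster-root (CR) node, and (b) every node with exactly one incoming edge is a cluster-follower (CF) node (i.e., it lies in the same topological cluster as its unique in-neighbor and is not the CR node of that cluster). -/
/-- Conditions (C1) and (C2): `G[S]` has a directed spanning tree, and either no
node of `S`, or exactly one node of `S` which is a root of `G[S]`, has incoming
edges from outside `S`. -/
def SatC1C2 {V : Type*} (E : V → V → Prop) (S : Set V) : Prop :=
  (∃ r ∈ S, ∀ j ∈ S,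
    Relation.ReflTransGen (fun a b => a ∈ S ∧ b ∈ S ∧ E a b) r j) ∧
  ((∀ i ∈ S, ∀ j ∉ S, ¬ E j i) ∨
    ∃ r ∈ S,
      (∀ j ∈ S, Relation.ReflTransGen (fun a b => a ∈ S ∧ b ∈ S ∧ E a b) r j) ∧
      (∃ j ∉ S, E j r) ∧
      ∀ i ∈ S, (∃ j ∉ S, E j i) → i = r)

/-- A topological cluster, by the characterization theorem: a nonempty maximal
set satisfying (C1) and (C2). -/
def TopCluster {V : Type*} (E : V → V → Prop) (S : Set V) : Prop :=
  S.Nonempty ∧ SatC1C2 E S ∧ ∀ S' : Set V, S ⊆ S' → SatC1C2 E S' → S' = S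

/-- `v` is the cluster-root (CR) node of cluster `S`: it belongs to `S` and is
either a leader node (no incoming edges in `G`) or a root of `G[S]` having
incoming edges from outside `S`. -/
def IsCR {V : Type*} (E : V → V → Prop) (S : Set V) (v : V) : Prop :=
  v ∈ S ∧ ((∀ j, ¬ E j v) ∨
    ((∀ j ∈ S, Relation.ReflTransGen (fun a b => a ∈ S ∧ b ∈ S ∧ E a b) v j) ∧
      ∃ j ∉ S, E j v))

/-- The graph has no leader-like strongly connected component: no nonempty,
internally strongly connected node set containing an edge and receiving no
incoming edge from outside. -/
def NoLSCC {V : Type*} (E : V → V → Prop) : Prop :=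
  ¬ ∃ S : Set V,
    (∃ a ∈ S, ∃ b ∈ S, E a b) ∧
    (∀ a ∈ S, ∀ b ∈ S,
      Relation.ReflTransGen (fun x y => x ∈ S ∧ y ∈ S ∧ E x y) a b) ∧
    (∀ i ∈ S, ∀ j ∉ S, ¬ E j i)

/-!
A node without in-edges is a leader node, hence a CR node. For a node `v ∈ S` whose only
in-neighbour `u` lies outside `S`, (C2) makes `v` the spanning root of `G[S]` and the only node
of `S` entered from outside; then `insert u S` still satisfies (C1)–(C2) with root `u`, since
the only edge into `v` now starts inside. Maximality of `S` forces `u ∈ S`, and then `v` has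
neither zero in-edges nor an in-edge from outside `S`, so it is not the CR node.
-/

section

variable {V : Type*} {E : V → V → Prop} {S : Set V} {u v r : V}

def IsSpanningRoot (E : V → V → Prop) (S : Set V) (r : V) : Prop :=
  r ∈ S ∧ ∀ j ∈ S, Relation.ReflTransGen (fun a b => a ∈ S ∧ b ∈ S ∧ E a b) r j

theorem IsSpanningRoot.insert_of_edge (hv : IsSpanningRoot E S v) (huv : E u v) :
    IsSpanningRoot E (insert u S) u := by
  refine ⟨Set.mem_insert u S, ?_⟩
  rintro j (rfl | hj)
  · exact .refl
  · refine .head ⟨Set.mem_insert u S, Set.mem_insert_of_mem u hv.1, huv⟩ ?_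
    refine Relation.ReflTransGen.mono (fun a b ⟨ha, hb, hab⟩ => ?_) _ _ (hv.2 j hj)
    exact ⟨Set.mem_insert_of_mem u ha, Set.mem_insert_of_mem u hb, hab⟩

theorem satC1C2_of_isSpanningRoot (hr : IsSpanningRoot E S r)
    (hentry : ∀ i ∈ S, ∀ j ∉ S, E j i → i = r) : SatC1C2 E S := by
  refine ⟨⟨r, hr⟩, ?_⟩
  by_cases hr_entered : ∃ j ∉ S, E j r
  · exact .inr ⟨r, hr.1, hr.2, hr_entered, fun i hi ⟨j, hj, hji⟩ => hentry i hi j hj hji⟩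
  · refine .inl fun i hi j hj hji => ?_
    obtain rfl := hentry i hi j hj hji
    exact hr_entered ⟨j, hj, hji⟩

theorem SatC1C2.isSpanningRoot_of_edge_mem (hS : SatC1C2 E S) (hv : v ∈ S) (hu : u ∉ S)
    (huv : E u v) : IsSpanningRoot E S v ∧ ∀ i ∈ S, ∀ j ∉ S, E j i → i = v := by
  rcases hS.2 with hclosed | ⟨r, hr, hreach, -, hentry⟩
  · exact absurd huv (hclosed v hv u hu)
  · obtain rfl := hentry v hv ⟨u, hu, huv⟩
    exact ⟨⟨hr, hreach⟩, fun i hi j hj hji => hentry i hi ⟨j, hj, hji⟩⟩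

theorem TopCluster.mem_of_unique_in_neighbor (hS : TopCluster E S) (hv : v ∈ S) (huv : E u v)
    (huniq : ∀ w, E w v → w = u) : u ∈ S := by
  by_contra hu
  obtain ⟨hroot, hentry⟩ := hS.2.1.isSpanningRoot_of_edge_mem hv hu huv
  have hext : SatC1C2 E (insert u S) := by
    refine satC1C2_of_isSpanningRoot (hroot.insert_of_edge huv) ?_
    rintro i (rfl | hi) j hj hji
    · rfl
    · obtain rfl := hentry i hi j (fun h => hj (.inr h)) hji
      exact absurd (huniq j hji ▸ Set.mem_insert u S) hj
  exact hu (hS.2.2 _ (Set.subset_insert u S) hext ▸ Set.mem_insert u S)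

theorem not_isCR_of_unique_in_neighbor_mem (hu : u ∈ S) (huv : E u v)
    (huniq : ∀ w, E w v → w = u) : ¬ IsCR E S v := by
  rintro ⟨-, hleader | ⟨-, j, hj, hjv⟩⟩
  · exact hleader u huv
  · exact hj (huniq j hjv ▸ hu)

end

theorem stmt15_general {V : Type*} (E : V → V → Prop) :
    (∀ v : V, (∀ j, ¬ E j v) →
      ∀ S : Set V, TopCluster E S → v ∈ S → IsCR E S v) ∧
    (∀ v u : V, E u v → (∀ w, E w v → w = u) →
      ∀ S : Set V, TopCluster E S → v ∈ S → u ∈ S ∧ ¬ IsCR E S v) := by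
  refine ⟨fun v hleader S _ hvS => ⟨hvS, .inl hleader⟩, ?_⟩
  intro v u huv huniq S hS hvS
  have hu : u ∈ S := hS.mem_of_unique_in_neighbor hvS huv huniq
  exact ⟨hu, not_isCR_of_unique_in_neighbor_mem hu huv huniq⟩

/-- Over the LSCC condensation of a graph (a graph with no LSCCs):
(a) every node with no incoming edge is the CR node of any topological cluster
containing it; (b) every node with exactly one incoming edge lies in the same
topological cluster as its unique in-neighbor and is not the CR node of that
cluster. -/
theorem stmt15 {V : Type*} [Fintype V] (E : V → V → Prop) (h : NoLSCC E) :
    (∀ v : V, (∀ j, ¬ E j v) →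
      ∀ S : Set V, TopCluster E S → v ∈ S → IsCR E S v) ∧
    (∀ v u : V, E u v → (∀ w, E w v → w = u) →
      ∀ S : Set V, TopCluster E S → v ∈ S → u ∈ S ∧ ¬ IsCR E S v) :=
  stmt15_general E
end

section
/- For the network ẋ = -Lx over a directed graph with no LSCCs, a popular node v (a node with at least two incoming edges) is a CF node if and only if all acyclic directed paths from any leader node to v share at least one common node other than v. -/
/-- `p` is an acyclic directed path (no repeated nodes) starting at a leader node
(a node with no incoming edges) and ending at `v`. -/
def AcyclicLeaderPath {V : Type*} (E : V → V → Prop) (v : V) (p : List V) : Prop :=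
  p.Nodup ∧ p.Chain' E ∧
    (∃ ℓ, p.head? = some ℓ ∧ ∀ j, ¬ E j ℓ) ∧ p.getLast? = some v

/-!
A CF node `v` is dominated by the root `r` of its cluster. Inside the cluster only `r` receives
edges from outside, so walking a leader path backwards from `v` we stay in the cluster until we
meet `r`. And `r ≠ v`: otherwise, `v` not being CR, the cluster would receive no outside edge at
all, and the ancestors of `v` would form a leader-like strongly connected component.

Conversely, if `w ≠ v` lies on every acyclic leader path to `v` and `v` were the CR node, adjoin
to the cluster `w` and every node that `w` dominates. Every node is reached from a leader, so
`w` reaches each node it dominates through dominated nodes, and these receive edges only from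
`w` or dominated nodes; hence the enlarged set still satisfies (C1) and (C2) with root `w`. It
contains the outside in-neighbour of `v`, contradicting maximality.
-/

open Relation

section

variable {V : Type*}

abbrev InducedRel (r : V → V → Prop) (S : Set V) (a b : V) : Prop := a ∈ S ∧ b ∈ S ∧ r a b

section Reachability

variable {r : V → V → Prop} {C : Set V} {a b : V}

theorem mem_of_reflTransGen_of_predClosed (hC : ∀ ⦃x y⦄, r x y → y ∈ C → x ∈ C)
    (h : ReflTransGen r a b) (hb : b ∈ C) : a ∈ C := by
  induction h using ReflTransGen.head_induction_on with
  | refl => exact hb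
  | head hac _ ih => exact hC hac ih

theorem reflTransGen_inducedRel_of_predClosed (hC : ∀ ⦃x y⦄, r x y → y ∈ C → x ∈ C)
    (h : ReflTransGen r a b) (hb : b ∈ C) : ReflTransGen (InducedRel r C) a b := by
  induction h with
  | refl => exact .refl
  | @tail c d _ hcd ih =>
    have hc := hC hcd hb
    exact (ih hc).tail ⟨hc, hb, hcd⟩

theorem Relation.ReflTransGen.of_inducedRel (h : ReflTransGen (InducedRel r C) a b) :
    ReflTransGen r a b :=
  ReflTransGen.mono (fun _ _ hxy => hxy.2.2) _ _ h

theorem Relation.ReflTransGen.inducedRel_mono {D : Set V} (hCD : C ⊆ D)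
    (h : ReflTransGen (InducedRel r C) a b) : ReflTransGen (InducedRel r D) a b :=
  ReflTransGen.mono (fun _ _ ⟨hx, hy, hxy⟩ => ⟨hCD hx, hCD hy, hxy⟩) _ _ h

theorem reflTransGen_of_isChain {p : List V} (hp : p.IsChain r) (ha : p.head? = some a)
    (hb : p.getLast? = some b) : ReflTransGen r a b := by
  obtain ⟨l, rfl⟩ := List.head?_eq_some_iff.mp ha
  rw [List.getLast?_eq_some_getLast (List.cons_ne_nil a l), Option.some_inj] at hb
  exact List.relationReflTransGen_of_exists_isChain_cons l hp hb

theorem reflTransGen_of_mem_isChain {p : List V} (hp : p.IsChain r) (hb : p.getLast? = some b)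
    {x : V} (hx : x ∈ p) : ReflTransGen r x b :=
  hp.backwards_induction (ReflTransGen r · b) p (fun _ _ h₁ h₂ => h₂.head h₁)
    (fun hne => by rw [List.getLast?_eq_some_getLast hne, Option.some_inj] at hb; rw [hb]) x hx

theorem exists_nodup_isChain_of_reflTransGen (h : ReflTransGen r a b) :
    ∃ p : List V, p.Nodup ∧ p.IsChain r ∧ p.head? = some a ∧ p.getLast? = some b := by
  induction h using ReflTransGen.head_induction_on with
  | refl => exact ⟨[b], List.nodup_singleton b, List.isChain_singleton b, rfl, rfl⟩
  | @head a c hac _ ih =>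
    obtain ⟨p, hnd, hch, hhd, hlast⟩ := ih
    by_cases hap : a ∈ p
    · -- shortcut the cycle through `a`
      obtain ⟨s, t, rfl⟩ := List.append_of_mem hap
      refine ⟨a :: t, hnd.sublist (List.sublist_append_right s _), hch.right_of_append, rfl, ?_⟩
      rw [List.getLast?_append, List.getLast?_eq_some_getLast (List.cons_ne_nil a t),
        Option.some_or] at hlast
      rwa [List.getLast?_eq_some_getLast (List.cons_ne_nil a t)]
    · obtain ⟨l, rfl⟩ := List.head?_eq_some_iff.mp hhd
      refine ⟨a :: c :: l, List.nodup_cons.mpr ⟨hap, hnd⟩, hch.cons_cons hac, rfl, ?_⟩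
      rwa [List.getLast?_cons_cons]

end Reachability

namespace NoLSCC

variable {E : V → V → Prop}

/-- The ancestors of such a node form a strongly connected set receiving no outside edges, so in
the absence of LSCCs they span no edge. -/
theorem leader_of_forall_reflTransGen (h : NoLSCC E) {z : V}
    (hz : ∀ u, ReflTransGen E u z → ReflTransGen E z u) : ∀ j, ¬ E j z := by
  intro a haz
  set A : Set V := {u | ReflTransGen E u z}
  have hA : ∀ ⦃x y⦄, E x y → y ∈ A → x ∈ A := fun x y hxy hy => ReflTransGen.head hxy hy
  refine h ⟨A, ⟨a, ReflTransGen.single haz, z, ReflTransGen.refl, haz⟩, ?_, ?_⟩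
  · intro x hx y hy
    exact reflTransGen_inducedRel_of_predClosed hA ((hx : ReflTransGen E x z).trans (hz y hy)) hy
  · intro i hi j hj hji
    exact hj (hA hji hi)

theorem exists_leader_reflTransGen [Finite V] (h : NoLSCC E) (x : V) :
    ∃ ℓ, (∀ j, ¬ E j ℓ) ∧ ReflTransGen E ℓ x := by
  obtain ⟨z, hzx, hmin⟩ := Set.Finite.exists_minimalFor (fun y => {u | ReflTransGen E u y})
    {y | ReflTransGen E y x} (Set.toFinite _) ⟨x, ReflTransGen.refl⟩
  refine ⟨z, h.leader_of_forall_reflTransGen fun u huz => ?_, hzx⟩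
  exact hmin (huz.trans hzx) (fun t htu => htu.trans huz) (ReflTransGen.refl : ReflTransGen E z z)

end NoLSCC

theorem satC1C2_iff {E : V → V → Prop} {S : Set V} :
    SatC1C2 E S ↔ ∃ r ∈ S, (∀ j ∈ S, ReflTransGen (InducedRel E S) r j) ∧
      ∀ i ∈ S, ∀ j ∉ S, E j i → i = r := by
  constructor
  · rintro ⟨⟨r, hrS, hroot⟩, hnone | ⟨r', hr'S, hroot', -, hentry⟩⟩
    · exact ⟨r, hrS, hroot, fun i hi j hj hji => (hnone i hi j hj hji).elim⟩
    · exact ⟨r', hr'S, hroot', fun i hi j hj hji => hentry i hi ⟨j, hj, hji⟩⟩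
  · rintro ⟨r, hrS, hroot, hentry⟩
    refine ⟨⟨r, hrS, hroot⟩, ?_⟩
    by_cases hr : ∃ j ∉ S, E j r
    · exact .inr ⟨r, hrS, hroot, hr, fun i hi ⟨j, hj, hji⟩ => hentry i hi j hj hji⟩
    · refine .inl fun i hi j hj hji => hr ⟨j, hj, ?_⟩
      rwa [← hentry i hi j hj hji]

/-- Dominance as in flow graphs, with the leaders as entry nodes. -/
def Dominates (E : V → V → Prop) (w v : V) : Prop :=
  ∀ ℓ, (∀ j, ¬ E j ℓ) → ¬ ReflTransGen (InducedRel E {w}ᶜ) ℓ v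

namespace Dominates

variable {E : V → V → Prop} {w v : V}

theorem iff_forall_mem_acyclicLeaderPath (hwv : w ≠ v) :
    Dominates E w v ↔ ∀ p, AcyclicLeaderPath E v p → w ∈ p := by
  constructor
  · rintro hdom p ⟨-, hch, ⟨ℓ, hhd, hℓ⟩, hlast⟩
    by_contra hwp
    have hch' : p.IsChain (InducedRel E {w}ᶜ) := hch.imp_of_mem_imp fun a b ha hb hab =>
      ⟨fun haw => hwp (haw ▸ ha), fun hbw => hwp (hbw ▸ hb), hab⟩
    exact hdom ℓ hℓ (reflTransGen_of_isChain hch' hhd hlast)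
  · intro hall ℓ hℓ hreach
    obtain ⟨p, hnd, hch, hhd, hlast⟩ := exists_nodup_isChain_of_reflTransGen hreach
    have hwp := hall p ⟨hnd, hch.imp fun _ _ hab => hab.2.2, ⟨ℓ, hhd, hℓ⟩, hlast⟩
    rcases (reflTransGen_of_mem_isChain hch hlast hwp).cases_head with hwv' | ⟨c, hwc, -⟩
    · exact hwv hwv'
    · exact hwc.1 rfl

theorem of_adj {c : V} (hdom : Dominates E w v) (hcv : E c v) (hcw : c ≠ w) (hvw : v ≠ w) :
    Dominates E w c :=
  fun ℓ hℓ hreach => hdom ℓ hℓ (hreach.tail ⟨hcw, hvw, hcv⟩)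

end Dominates

def dominatedSet (E : V → V → Prop) (w : V) : Set V := {x | x ≠ w ∧ Dominates E w x}

theorem mem_insert_dominatedSet_of_adj {E : V → V → Prop} {w x z : V} (hxz : E x z)
    (hz : z ∈ dominatedSet E w) : x ∈ insert w (dominatedSet E w) := by
  by_cases hxw : x = w
  · exact .inl hxw
  · exact .inr ⟨hxw, hz.2.of_adj hxz hxw hz.1⟩

/-- Take a leader walk to `z` and follow it backwards: a predecessor of a dominated node is `w` or
again dominated, and the walk cannot start at a dominated node, so it meets `w`. -/
theorem NoLSCC.reflTransGen_of_mem_dominatedSet [Finite V] {E : V → V → Prop} (h : NoLSCC E)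
    {w z : V} (hz : z ∈ dominatedSet E w) :
    ReflTransGen (InducedRel E (insert w (dominatedSet E w))) w z := by
  obtain ⟨ℓ, hℓ, hreach⟩ := h.exists_leader_reflTransGen z
  induction hreach with
  | refl => exact (hz.2 ℓ hℓ .refl).elim
  | @tail c z _ hcz ih =>
    rcases mem_insert_dominatedSet_of_adj hcz hz with rfl | hc
    · exact .single ⟨.inl rfl, .inr hz, hcz⟩
    · exact (ih hc).tail ⟨.inr hc, .inr hz, hcz⟩

theorem SatC1C2.exists_dominates_of_not_isCR {E : V → V → Prop} {S : Set V} {v : V}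
    (h : NoLSCC E) (hS : SatC1C2 E S) (hv : v ∈ S) (hCF : ¬ IsCR E S v) :
    ∃ w, w ≠ v ∧ Dominates E w v := by
  obtain ⟨r, hrS, hroot, hentry⟩ := satC1C2_iff.mp hS
  have hrv : r ≠ v := by
    rintro rfl
    have hclosed : ∀ ⦃x y⦄, E x y → y ∈ S → x ∈ S := fun x y hxy hy => by
      by_contra hx
      obtain rfl := hentry y hy x hx hxy
      exact hCF ⟨hv, .inr ⟨hroot, x, hx, hxy⟩⟩
    refine hCF ⟨hv, .inl (h.leader_of_forall_reflTransGen fun u hu => ?_)⟩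
    exact (hroot u (mem_of_reflTransGen_of_predClosed hclosed hu hv)).of_inducedRel
  refine ⟨r, hrv, fun ℓ hℓ hreach => ?_⟩
  have hclosed : ∀ ⦃x y⦄, InducedRel E {r}ᶜ x y → y ∈ S \ {r} → x ∈ S \ {r} :=
    fun x y ⟨hxr, _, hxy⟩ ⟨hy, hyr⟩ => ⟨by_contra fun hx => hyr (hentry y hy x hx hxy), hxr⟩
  obtain ⟨hℓS, hℓr⟩ := mem_of_reflTransGen_of_predClosed hclosed hreach ⟨hv, hrv.symm⟩
  rcases (hroot ℓ hℓS).cases_tail with hℓr' | ⟨c, -, hcℓ⟩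
  · exact hℓr hℓr'
  · exact hℓ c hcℓ.2.2

theorem satC1C2_union_dominatedSet [Finite V] {E : V → V → Prop} {S : Set V} {v w j : V}
    (h : NoLSCC E) (hS : SatC1C2 E S) (hv : v ∈ S)
    (hroot : ∀ x ∈ S, ReflTransGen (InducedRel E S) v x) (hj : j ∉ S) (hjv : E j v)
    (hvw : v ∈ dominatedSet E w) : SatC1C2 E (S ∪ insert w (dominatedSet E w)) := by
  set T := insert w (dominatedSet E w)
  have hreach (x : V) (hx : x ∈ T) : ReflTransGen (InducedRel E (S ∪ T)) w x := by
    rcases hx with rfl | hx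
    · exact .refl
    · exact (h.reflTransGen_of_mem_dominatedSet hx).inducedRel_mono Set.subset_union_right
  refine satC1C2_iff.mpr ⟨w, .inr (.inl rfl), fun x hx => ?_, fun i hi k hk hki => ?_⟩
  · rcases hx with hxS | hxT
    · exact (hreach v (.inr hvw)).trans ((hroot x hxS).inducedRel_mono Set.subset_union_left)
    · exact hreach x hxT
  · have hiD : i ∉ dominatedSet E w := fun hiD =>
      hk (.inr (mem_insert_dominatedSet_of_adj hki hiD))
    rcases hi with hiS | rfl | hiD'
    · -- `i` and `v` both receive edges from outside `S`, so both are its entry node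
      obtain ⟨r, -, -, hentry⟩ := satC1C2_iff.mp hS
      have hiv : i = v := (hentry i hiS k (fun hkS => hk (.inl hkS)) hki).trans
        (hentry v hv j hj hjv).symm
      exact absurd (hiv ▸ hvw) hiD
    · rfl
    · exact absurd hiD' hiD

theorem TopCluster.not_dominates_of_isCR [Finite V] {E : V → V → Prop} {S : Set V} {v w : V}
    (h : NoLSCC E) (hS : TopCluster E S) (hCR : IsCR E S v) (hwv : w ≠ v) :
    ¬ Dominates E w v := by
  intro hdom
  obtain ⟨hv, hleader | ⟨hroot, j, hj, hjv⟩⟩ := hCR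
  · exact hdom v hleader .refl
  have hmax := hS.2.2 _ Set.subset_union_left
    (satC1C2_union_dominatedSet h hS.2.1 hv hroot hj hjv ⟨hwv.symm, hdom⟩)
  exact hj (hmax ▸ .inr (mem_insert_dominatedSet_of_adj hjv ⟨hwv.symm, hdom⟩))

end

theorem stmt16_general {V : Type*} [Fintype V] (E : V → V → Prop) (h : NoLSCC E)
    (v : V) (S : Set V) (hS : TopCluster E S) (hv : v ∈ S) :
    ¬ IsCR E S v ↔
      ∃ w : V, w ≠ v ∧ ∀ p : List V, AcyclicLeaderPath E v p → w ∈ p := by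
  constructor
  · intro hCF
    obtain ⟨w, hwv, hdom⟩ := hS.2.1.exists_dominates_of_not_isCR h hv hCF
    exact ⟨w, hwv, (Dominates.iff_forall_mem_acyclicLeaderPath hwv).mp hdom⟩
  · rintro ⟨w, hwv, hall⟩ hCR
    exact hS.not_dominates_of_isCR h hCR hwv
      ((Dominates.iff_forall_mem_acyclicLeaderPath hwv).mpr hall)

/-- In a graph with no LSCCs, a popular node `v` (at least two incoming edges),
belonging to a topological cluster `S`, is a CF node (not the CR node of `S`)
iff all acyclic directed paths from any leader node to `v` share a common node
other than `v`. -/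
theorem stmt16 {V : Type*} [Fintype V] (E : V → V → Prop) (h : NoLSCC E)
    (v : V) (hpop : ∃ j k : V, j ≠ k ∧ E j v ∧ E k v)
    (S : Set V) (hS : TopCluster E S) (hv : v ∈ S) :
    ¬ IsCR E S v ↔
      ∃ w : V, w ≠ v ∧ ∀ p : List V, AcyclicLeaderPath E v p → w ∈ p :=
  stmt16_general E h v S hS hv
end

section
/- If a topological cluster of the network ẋ = -Lx has incoming edges from other topological clusters, then those incoming edges must originate from at least two distinct topological clusters; if all incoming edges into a set S satisfying conditions (C1) and (C2) originate from a single topological cluster T, then S ∪ T-side nodes form a larger set in the same topological cluster, so S is not maximal. -/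
section Clusters

variable {V : Type*} {E : V → V → Prop}

lemma reflTransGen_induced_mono {S S' : Set V} (h : S ⊆ S') {a b : V}
    (hab : Relation.ReflTransGen (fun a b => a ∈ S ∧ b ∈ S ∧ E a b) a b) :
    Relation.ReflTransGen (fun a b => a ∈ S' ∧ b ∈ S' ∧ E a b) a b :=
  Relation.ReflTransGen.mono (fun _ _ hxy => ⟨h hxy.1, h hxy.2.1, hxy.2.2⟩) a b hab

lemma satC1C2_iff_exists_root {S : Set V} :
    SatC1C2 E S ↔ ∃ r ∈ S,
      (∀ j ∈ S, Relation.ReflTransGen (fun a b => a ∈ S ∧ b ∈ S ∧ E a b) r j) ∧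
      ∀ i ∈ S, ∀ j ∉ S, E j i → i = r := by
  constructor
  · rintro ⟨⟨r, hrS, hr⟩, hnone | ⟨r', hr'S, hr', -, huniq⟩⟩
    · exact ⟨r, hrS, hr, fun i hi j hj hji => absurd hji (hnone i hi j hj)⟩
    · exact ⟨r', hr'S, hr', fun i hi j hj hji => huniq i hi ⟨j, hj, hji⟩⟩
  · rintro ⟨r, hrS, hr, huniq⟩
    refine ⟨⟨r, hrS, hr⟩, ?_⟩
    by_cases hin : ∃ j ∉ S, E j r
    · exact Or.inr ⟨r, hrS, hr, hin, fun i hi ⟨j, hj, hji⟩ => huniq i hi j hj hji⟩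
    · refine Or.inl fun i hi j hj hji => hin ⟨j, hj, ?_⟩
      rwa [← huniq i hi j hj hji]

lemma satC1C2_singleton (v : V) : SatC1C2 E {v} :=
  satC1C2_iff_exists_root.2 ⟨v, rfl, fun _ hj => hj ▸ .refl, fun _ hi _ _ _ => hi⟩

lemma exists_topCluster_mem [Finite V] (E : V → V → Prop) (v : V) :
    ∃ S : Set V, v ∈ S ∧ TopCluster E S := by
  obtain ⟨S, hvS, hSsat, hSmax⟩ :=
    Finite.exists_le_maximal (p := SatC1C2 E) (satC1C2_singleton (E := E) v)
  have hv : v ∈ S := hvS rfl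
  exact ⟨S, hv, ⟨v, hv⟩, hSsat, fun S' hSS' hS' => (hSmax hS' hSS').antisymm hSS'⟩

lemma satC1C2_union {S T : Set V} (hS : SatC1C2 E S) (hT : SatC1C2 E T)
    (hin : ∀ i ∈ S, ∀ j, j ∉ S → E j i → j ∈ T) (hex : ∃ i ∈ S, ∃ j, j ∉ S ∧ E j i) :
    SatC1C2 E (S ∪ T) := by
  obtain ⟨rS, hrS, hrS_reach, hrS_uniq⟩ := satC1C2_iff_exists_root.1 hS
  obtain ⟨rT, hrT, hrT_reach, hrT_uniq⟩ := satC1C2_iff_exists_root.1 hT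
  obtain ⟨i₀, hi₀, j₀, hj₀, hji₀⟩ := hex
  have hj₀T : j₀ ∈ T := hin i₀ hi₀ j₀ hj₀ hji₀
  have hj₀rS : E j₀ rS := hrS_uniq i₀ hi₀ j₀ hj₀ hji₀ ▸ hji₀
  refine satC1C2_iff_exists_root.2 ⟨rT, .inr hrT, ?_, ?_⟩
  · rintro x (hxS | hxT)
    · have hrT_j₀ := reflTransGen_induced_mono (Set.subset_union_right (s := S))
        (hrT_reach j₀ hj₀T)
      have hrS_x := reflTransGen_induced_mono (Set.subset_union_left (t := T))
        (hrS_reach x hxS)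
      exact (hrT_j₀.tail ⟨.inr hj₀T, .inl hrS, hj₀rS⟩).trans hrS_x
    · exact reflTransGen_induced_mono Set.subset_union_right (hrT_reach x hxT)
  · rintro i (hiS | hiT) j hj hji
    · exact absurd (.inr (hin i hiS j (fun h => hj (.inl h)) hji)) hj
    · exact hrT_uniq i hiT j (fun h => hj (.inr h)) hji

lemma TopCluster.exists_inEdges_from_two_clusters [Finite V] {S : Set V} (hS : TopCluster E S)
    (hex : ∃ i ∈ S, ∃ j, j ∉ S ∧ E j i) :
    ∃ T₁ T₂ : Set V, TopCluster E T₁ ∧ TopCluster E T₂ ∧ T₁ ≠ T₂ ∧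
      (∃ i ∈ S, ∃ j ∈ T₁, j ∉ S ∧ E j i) ∧ (∃ i ∈ S, ∃ j ∈ T₂, j ∉ S ∧ E j i) := by
  obtain ⟨i₀, hi₀, j₀, hj₀, hji₀⟩ := hex
  obtain ⟨T₁, hj₀T₁, hT₁⟩ := exists_topCluster_mem E j₀
  have hout : ∃ i ∈ S, ∃ j, j ∉ S ∧ j ∉ T₁ ∧ E j i := by
    by_contra! hall
    have hunion : S ∪ T₁ = S := hS.2.2 _ Set.subset_union_left <|
      satC1C2_union hS.2.1 hT₁.2.1 (fun i hi j hj hji => by_contra (hall i hi j hj · hji))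
        ⟨i₀, hi₀, j₀, hj₀, hji₀⟩
    exact hj₀ (hunion ▸ .inr hj₀T₁)
  obtain ⟨i₁, hi₁, j₁, hj₁S, hj₁T₁, hji₁⟩ := hout
  obtain ⟨T₂, hj₁T₂, hT₂⟩ := exists_topCluster_mem E j₁
  exact ⟨T₁, T₂, hT₁, hT₂, fun h => hj₁T₁ (h ▸ hj₁T₂),
    ⟨i₀, hi₀, j₀, hj₀T₁, hj₀, hji₀⟩, ⟨i₁, hi₁, j₁, hj₁T₂, hj₁S, hji₁⟩⟩

lemma exists_ssuperset_satC1C2 {S T : Set V} (hS : SatC1C2 E S) (hT : TopCluster E T)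
    (hST : Disjoint S T) (hin : ∀ i ∈ S, ∀ j, j ∉ S → E j i → j ∈ T)
    (hex : ∃ i ∈ S, ∃ j, j ∉ S ∧ E j i) :
    ∃ S' : Set V, S ⊆ S' ∧ S' ≠ S ∧ SatC1C2 E S' := by
  refine ⟨S ∪ T, Set.subset_union_left, fun h => ?_, satC1C2_union hS hT.2.1 hin hex⟩
  obtain ⟨t, ht⟩ := hT.1
  exact hST.ne_of_mem (h ▸ .inr ht) ht rfl

end Clusters

/-- (i) If a topological cluster `S` has incoming edges from outside, then these
incoming edges originate from at least two distinct topological clusters.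
(ii) If a nonempty set `S` satisfying (C1), (C2) is disjoint from a topological
cluster `T` and all incoming edges into `S` from outside originate in `T` (and
there is at least one such edge), then `S` is not maximal: some strictly larger
set still satisfies (C1) and (C2). -/
theorem stmt18 {V : Type*} [Fintype V] (E : V → V → Prop) :
    (∀ S : Set V, TopCluster E S → (∃ i ∈ S, ∃ j, j ∉ S ∧ E j i) →
      ∃ T₁ T₂ : Set V, TopCluster E T₁ ∧ TopCluster E T₂ ∧ T₁ ≠ T₂ ∧
        (∃ i ∈ S, ∃ j ∈ T₁, j ∉ S ∧ E j i) ∧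
        (∃ i ∈ S, ∃ j ∈ T₂, j ∉ S ∧ E j i)) ∧
    (∀ S T : Set V, S.Nonempty → SatC1C2 E S → TopCluster E T → Disjoint S T →
      (∀ i ∈ S, ∀ j, j ∉ S → E j i → j ∈ T) →
      (∃ i ∈ S, ∃ j, j ∉ S ∧ E j i) →
      ∃ S' : Set V, S ⊆ S' ∧ S' ≠ S ∧ SatC1C2 E S') :=
  ⟨fun _ hS hex => hS.exists_inEdges_from_two_clusters hex,
    fun _ _ _ hS hT hST hin hex => exists_ssuperset_satC1C2 hS hT hST hin hex⟩
end
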